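/- arXiv:2510.14840 — 4 statements merged into one kernel-verified Lean document; each statement's English description precedes it below -/
import Mathlib

section
/- Let q be a prime power and m a positive integer. Then W(x^m − 1) ≤ 2^{(m + gcd(m, q−1))/2}, where W(x^m − 1) is the number of monic squarefree divisors of x^m − 1 in F_q[x]. In particular W(x^m − 1) ≤ 2^m, with equality if and only if m divides q − 1; and if m does not divide q − 1, then W(x^m − 1) ≤ 2^{3m/4}. -/
open Polynomial

/-- The `q`-associate linearized map: for `f = Σ fᵢ xⁱ ∈ K[x]`,
`qAssoc q f β = Σ fᵢ β^(qⁱ)`. -/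
noncomputable def qAssoc (q : ℕ) {K F : Type*} [Field K] [Field F] [Algebra K F]
    (f : K[X]) (β : F) : F :=
  ∑ i ∈ Finset.range (f.natDegree + 1), f.coeff i • β ^ q ^ i

/-- `h` is the `F_q`-order of `β`: the monic polynomial of least degree with `L_h(β) = 0`. -/
def IsOrd (q : ℕ) {K F : Type*} [Field K] [Field F] [Algebra K F] (β : F) (h : K[X]) : Prop :=
  h.Monic ∧ qAssoc q h β = 0 ∧
    ∀ g : K[X], g.Monic → qAssoc q g β = 0 → h.natDegree ≤ g.natDegree

/-- `β` is normal for the degree-`m` extension `F/K` with `|K| = q`: its conjugates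
`β, β^q, …, β^(q^(m-1))` form a `K`-basis of `F`. -/
def IsNormalElem (q m : ℕ) (K : Type*) {F : Type*} [Field K] [Field F] [Algebra K F]
    (β : F) : Prop :=
  LinearIndependent K (fun i : Fin m => β ^ q ^ (i : ℕ)) ∧
    Submodule.span K (Set.range fun i : Fin m => β ^ q ^ (i : ℕ)) = ⊤

/-- `b` lies in the intermediate field `F_{q^d} = {x | x^(q^d) = x}` and is normal over
`K = F_q` as an element of `F_{q^d}`: its conjugates `b, b^q, …, b^(q^(d-1))` form a
`K`-basis of `F_{q^d}`. -/
def IsNormalSub (q d : ℕ) (K : Type*) {F : Type*} [Field K] [Field F] [Algebra K F]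
    (b : F) : Prop :=
  b ^ q ^ d = b ∧
    LinearIndependent K (fun i : Fin d => b ^ q ^ (i : ℕ)) ∧
    Submodule.span K (Set.range fun i : Fin d => b ^ q ^ (i : ℕ)) =
      Submodule.span K {x : F | x ^ q ^ d = x}

/-- The relative trace: `trQ q e n α = Σ_{i=0}^{n-1} α^(q^(i·e))`; with `n = m / e` this is
`Tr_{m/e}(α)`, the trace from `F_{q^m}` to `F_{q^e}`. -/
def trQ (q e n : ℕ) {F : Type*} [Field F] (α : F) : F :=
  ∑ i ∈ Finset.range n, α ^ q ^ (i * e)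

/-- `α` is a primitive element: it generates the multiplicative group. -/
def IsPrimitiveElem {F : Type*} [Field F] (α : F) : Prop :=
  ∀ x : F, x ≠ 0 → ∃ n : ℕ, x = α ^ n

/-- `Φ(f)`: the order of the unit group of `K[x]/(f)`. -/
noncomputable def PhiQ {K : Type*} [Field K] (f : K[X]) : ℕ :=
  Nat.card (K[X] ⧸ Ideal.span {f})ˣ

/-- `W(n)`: the number of squarefree positive divisors of `n`. -/
def Wnat (n : ℕ) : ℕ := (n.divisors.filter Squarefree).card

/-- `W(f)`: the number of monic squarefree divisors of `f` in `K[x]`. -/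
noncomputable def Wpoly {K : Type*} [Field K] (f : K[X]) : ℕ :=
  Nat.card {g : K[X] // g.Monic ∧ Squarefree g ∧ g ∣ f}

/-- `d ∈ λ_k(m)`: a strictly increasing `k`-tuple of divisors of `m`, all `< m`,
with `dᵢ ∤ dⱼ` for `i < j`. -/
def LambdaTuple (m k : ℕ) (d : Fin k → ℕ) : Prop :=
  (∀ i, d i ∣ m) ∧ (∀ i, d i < m) ∧ StrictMono d ∧ ∀ i j : Fin k, i < j → ¬ d i ∣ d j

/-- `λ(d) = deg lcm(x^(d₁) - 1, …, x^(d_k) - 1)` (computed in characteristic zero, where it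
agrees with the inclusion–exclusion formula of the gcd's). -/
noncomputable def lambdaDeg {k : ℕ} (d : Fin k → ℕ) : ℕ :=
  (Finset.univ.lcm fun i : Fin k => (X : ℤ[X]) ^ (d i) - 1).natDegree

/-- The tuple `a` is `d`-admissible. -/
def DAdmissible (q : ℕ) {F : Type*} [Field F] {k : ℕ} (d : Fin k → ℕ) (a : Fin k → F) : Prop :=
  ∀ i j : Fin k, i < j →
    trQ q (Nat.gcd (d i) (d j)) (d i / Nat.gcd (d i) (d j)) (a i) =
      trQ q (Nat.gcd (d i) (d j)) (d j / Nat.gcd (d i) (d j)) (a j)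

/-- `g` is the monic gcd of `f` and `h` in `K[x]`. -/
def IsMonicGcd {K : Type*} [Field K] (f h g : K[X]) : Prop :=
  g.Monic ∧ g ∣ f ∧ g ∣ h ∧ ∀ e : K[X], e ∣ f → e ∣ h → e ∣ g

/-- `g` is the monic lcm of the family `s` in `K[x]`. -/
def IsMonicLcm {K : Type*} [Field K] {ι : Type*} (s : ι → K[X]) (g : K[X]) : Prop :=
  g.Monic ∧ (∀ i, s i ∣ g) ∧ ∀ h : K[X], (∀ i, s i ∣ h) → g ∣ h

section Aux

open UniqueFactorizationMonoid

variable {K : Type*} [Field K] [DecidableEq K]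

theorem mem_nf_iff {f p : K[X]} (hf0 : f ≠ 0) :
    p ∈ (normalizedFactors f).toFinset ↔ Irreducible p ∧ p.Monic ∧ p ∣ f := by
  rw [Multiset.mem_toFinset]
  constructor
  · intro hp
    have hp0 : p ≠ 0 := (prime_of_normalized_factor p hp).ne_zero
    have hm : p.Monic := by
      have := Polynomial.monic_normalize hp0
      rwa [normalize_normalized_factor p hp] at this
    exact ⟨irreducible_of_normalized_factor p hp, hm, dvd_of_mem_normalizedFactors hp⟩
  · rintro ⟨hirr, hmon, hdvd⟩
    have h1 : normalizedFactors p = {p} := by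
      rw [normalizedFactors_irreducible hirr, hmon.normalize_eq_self]
    have h2 : normalizedFactors p ≤ normalizedFactors f :=
      (dvd_iff_normalizedFactors_le_normalizedFactors hirr.ne_zero hf0).mp hdvd
    rw [h1, Multiset.singleton_le] at h2
    exact h2

theorem Wpoly_eq_pow {f : K[X]} (hf : f.Monic) (hsq : Squarefree f) :
    Wpoly f = 2 ^ (normalizedFactors f).toFinset.card := by
  classical
  have hf0 : f ≠ 0 := hf.ne_zero
  set S := (normalizedFactors f).toFinset with hS
  have hnd : (normalizedFactors f).Nodup :=
    (squarefree_iff_nodup_normalizedFactors hf0).mp hsq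
  have hkey : ∀ T : Finset K[X], T ⊆ S → normalizedFactors (T.prod id) = T.val := by
    intro T hT
    have hprime : ∀ p ∈ T.val, Prime p := fun p hp =>
      prime_of_normalized_factor p (Multiset.mem_toFinset.mp (hT hp))
    have h0 : (0 : K[X]) ∉ T.val := fun h => (hprime 0 h).ne_zero rfl
    have : T.prod id = T.val.prod := by
      rw [Finset.prod, Multiset.map_id]
    rw [this, normalizedFactors_multiset_prod _ h0]
    have : T.val.map normalizedFactors = T.val.map (fun p => ({p} : Multiset K[X])) := by
      apply Multiset.map_congr rfl
      intro p hp
      have hmem := (mem_nf_iff hf0).mp (hT hp)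
      rw [normalizedFactors_irreducible hmem.1, hmem.2.1.normalize_eq_self]
    rw [this]
    exact Multiset.sum_map_singleton _
  have hprop : ∀ T : Finset K[X], T ⊆ S →
      (T.prod id).Monic ∧ Squarefree (T.prod id) ∧ T.prod id ∣ f := by
    intro T hT
    have hmon : (T.prod id).Monic := by
      apply Polynomial.monic_prod_of_monic
      intro p hp
      exact ((mem_nf_iff hf0).mp (hT hp)).2.1
    refine ⟨hmon, ?_, ?_⟩
    · rw [squarefree_iff_nodup_normalizedFactors hmon.ne_zero, hkey T hT]
      exact T.nodup
    · rw [dvd_iff_normalizedFactors_le_normalizedFactors hmon.ne_zero hf0, hkey T hT]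
      rw [Multiset.le_iff_subset T.nodup]
      intro p hp
      exact Multiset.mem_toFinset.mp (hT hp)
  let φ : S.powerset → {g : K[X] // g.Monic ∧ Squarefree g ∧ g ∣ f} := fun T =>
    ⟨(T : Finset K[X]).prod id, hprop T (Finset.mem_powerset.mp T.2)⟩
  have hbij : Function.Bijective φ := by
    constructor
    · rintro ⟨T, hT⟩ ⟨T', hT'⟩ h
      have h' : (T.prod id) = (T'.prod id) := congrArg Subtype.val h
      have h2 := hkey T (Finset.mem_powerset.mp hT)
      rw [h', hkey T' (Finset.mem_powerset.mp hT')] at h2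
      exact Subtype.ext (Finset.val_injective h2.symm)
    · rintro ⟨g, hgm, hgsq, hgdvd⟩
      have hg0 : g ≠ 0 := hgm.ne_zero
      have hgnd : (normalizedFactors g).Nodup :=
        (squarefree_iff_nodup_normalizedFactors hg0).mp hgsq
      refine ⟨⟨(normalizedFactors g).toFinset, ?_⟩, ?_⟩
      · rw [Finset.mem_powerset, hS]
        intro p hp
        rw [Multiset.mem_toFinset] at hp ⊢
        exact Multiset.mem_of_le
          ((dvd_iff_normalizedFactors_le_normalizedFactors hg0 hf0).mp hgdvd) hp
      · apply Subtype.ext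
        show ((normalizedFactors g).toFinset.prod id) = g
        have hval : (normalizedFactors g).toFinset.val = normalizedFactors g := by
          rw [Multiset.toFinset_val, Multiset.dedup_eq_self.mpr hgnd]
        have : (normalizedFactors g).toFinset.prod id = (normalizedFactors g).prod := by
          rw [Finset.prod, Multiset.map_id, hval]
        rw [this]
        refine eq_of_monic_of_associated ?_ hgm (prod_normalizedFactors hg0)
        have h3 := Polynomial.monic_multiset_prod_of_monic (normalizedFactors g) id
          (fun p hp => ((mem_nf_iff hg0).mp (Multiset.mem_toFinset.mpr hp)).2.1)
        rwa [Multiset.map_id] at h3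
  rw [Wpoly, ← Nat.card_congr (Equiv.ofBijective φ hbij), Nat.card_eq_finsetCard,
    Finset.card_powerset]

theorem prod_nf_eq {f : K[X]} (hf : f.Monic) (hsq : Squarefree f) :
    (normalizedFactors f).toFinset.prod id = f := by
  have hf0 := hf.ne_zero
  have hnd := (squarefree_iff_nodup_normalizedFactors hf0).mp hsq
  have hval : (normalizedFactors f).toFinset.val = normalizedFactors f := by
    rw [Multiset.toFinset_val, Multiset.dedup_eq_self.mpr hnd]
  have h1 : (normalizedFactors f).toFinset.prod id = (normalizedFactors f).prod := by
    rw [Finset.prod, Multiset.map_id, hval]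
  rw [h1]
  refine eq_of_monic_of_associated ?_ hf (prod_normalizedFactors hf0)
  have h3 := Polynomial.monic_multiset_prod_of_monic (normalizedFactors f) id
    (fun p hp => ((mem_nf_iff hf0).mp (Multiset.mem_toFinset.mpr hp)).2.1)
  rwa [Multiset.map_id] at h3

theorem sum_natDegree_nf {f : K[X]} (hf : f.Monic) (hsq : Squarefree f) :
    ∑ p ∈ (normalizedFactors f).toFinset, p.natDegree = f.natDegree := by
  have hf0 := hf.ne_zero
  conv_rhs => rw [← prod_nf_eq hf hsq]
  rw [Finset.prod, Multiset.map_id, Polynomial.natDegree_multiset_prod_of_monic _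
    (fun p hp => ((mem_nf_iff hf0).mp (Finset.mem_def.mpr hp)).2.1)]
  rfl

theorem filter_linear_eq {f : K[X]} (hf : f.Monic) (hsq : Squarefree f) :
    ((normalizedFactors f).toFinset.filter (fun p => p.natDegree = 1)) =
      f.roots.toFinset.image (fun c => X - C c) := by
  have hf0 := hf.ne_zero
  ext p
  simp only [Finset.mem_filter, Finset.mem_image, Multiset.mem_toFinset]
  constructor
  · rintro ⟨hp, hdeg⟩
    obtain ⟨hirr, hmon, hdvd⟩ := (mem_nf_iff hf0).mp (Multiset.mem_toFinset.mpr hp)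
    have hpeq : p = X - C (-(p.coeff 0)) := by
      rw [map_neg, sub_neg_eq_add]
      exact hmon.eq_X_add_C hdeg
    refine ⟨-(p.coeff 0), ?_, hpeq.symm⟩
    rw [mem_roots hf0]
    exact dvd_iff_isRoot.mp (hpeq ▸ hdvd)
  · rintro ⟨c, hc, rfl⟩
    rw [mem_roots hf0] at hc
    refine ⟨Multiset.mem_toFinset.mp ((mem_nf_iff hf0).mpr
      ⟨irreducible_X_sub_C c, monic_X_sub_C c, dvd_iff_isRoot.mpr hc⟩), natDegree_X_sub_C c⟩

theorem card_filter_linear {f : K[X]} (hf : f.Monic) (hsq : Squarefree f) :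
    ((normalizedFactors f).toFinset.filter (fun p => p.natDegree = 1)).card =
      f.roots.toFinset.card := by
  rw [filter_linear_eq hf hsq]
  apply Finset.card_image_of_injective
  intro a b hab
  have : C a = C b := by
    have := sub_right_injective hab
    simpa using this
  exact C_injective this

theorem card_roots_X_pow_sub_one {K : Type*} [Field K] [Fintype K] {n : ℕ} (hn : 0 < n)
    (hpn : ¬ ringChar K ∣ n) :
    Multiset.card ((X ^ n - 1 : K[X]).roots) = Nat.gcd n (Fintype.card K - 1) := by
  classical
  set q := Fintype.card K with hq
  have hq1 : 1 < q := Fintype.one_lt_card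
  set p := ringChar K with hp
  obtain ⟨kk, hpp, hcard⟩ := FiniteField.card K p
  have hpq1 : ¬ p ∣ q - 1 := by
    intro h
    have hpq : p ∣ q := by rw [hq, hcard]; exact dvd_pow_self p kk.ne_zero
    have : p ∣ 1 := by
      have := Nat.dvd_sub hpq h
      rwa [Nat.sub_sub_self hq1.le] at this
    exact hpp.one_lt.ne' (Nat.dvd_one.mp this)
  set g := Nat.gcd n (q - 1) with hg
  have hg0 : 0 < g := Nat.gcd_pos_of_pos_left _ hn
  have hgq : g ∣ q - 1 := Nat.gcd_dvd_right _ _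
  have hpg : ¬ p ∣ g := fun h => hpq1 (h.trans hgq)
  have hcast : ∀ k : ℕ, ¬ p ∣ k → (k : K) ≠ 0 := fun k hk =>
    fun h => hk ((CharP.cast_eq_zero_iff K p k).mp h)
  have sepn : Separable (X ^ n - 1 : K[X]) := by
    have := separable_X_pow_sub_C (1 : K) (hcast n hpn) one_ne_zero
    rwa [map_one] at this
  have sepg : Separable (X ^ g - 1 : K[X]) := by
    have := separable_X_pow_sub_C (1 : K) (hcast g hpg) one_ne_zero
    rwa [map_one] at this
  have hne : ∀ k : ℕ, 0 < k → (X ^ k - 1 : K[X]) ≠ 0 := fun k hk => by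
    have := X_pow_sub_C_ne_zero hk (1 : K)
    rwa [map_one] at this
  -- X^q - X splits
  have hsplit : Splits (X ^ q - X : K[X]) := by
    rw [splits_iff_card_roots, FiniteField.roots_X_pow_card_sub_X,
      FiniteField.X_pow_card_sub_X_natDegree_eq _ hq1]
    simp [Finset.card_univ, hq]
  have hdvd1 : (X ^ g - 1 : K[X]) ∣ X ^ (q - 1) - 1 := by
    obtain ⟨c, hc⟩ := hgq
    have := sub_dvd_pow_sub_pow (X ^ g : K[X]) 1 c
    rwa [one_pow, ← pow_mul, ← hc] at this
  have hdvd2 : (X ^ (q - 1) - 1 : K[X]) ∣ X ^ q - X := by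
    refine ⟨X, ?_⟩
    rw [sub_mul, one_mul, ← pow_succ, Nat.sub_add_cancel hq1.le]
  have hsplitg : Splits (X ^ g - 1 : K[X]) :=
    Splits.of_dvd hsplit (FiniteField.X_pow_card_sub_X_ne_zero _ hq1)
      (hdvd1.trans hdvd2)
  have hcardg : Multiset.card ((X ^ g - 1 : K[X]).roots) = g := by
    rw [splits_iff_card_roots.mp hsplitg]
    have h5 : (X ^ g - 1 : K[X]) = X ^ g - C 1 := by rw [map_one]
    rw [h5]
    exact natDegree_X_pow_sub_C
  have hroots : (X ^ n - 1 : K[X]).roots = (X ^ g - 1 : K[X]).roots := by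
    rw [Multiset.Nodup.ext (nodup_roots sepn) (nodup_roots sepg)]
    intro a
    rw [mem_roots (hne n hn), mem_roots (hne g hg0)]
    have hr : ∀ k : ℕ, IsRoot (X ^ k - 1 : K[X]) a ↔ a ^ k = 1 := fun k => by
      simp [IsRoot, sub_eq_zero]
    rw [hr, hr]
    constructor
    · intro han
      have ha0 : a ≠ 0 := by
        rintro rfl
        rw [zero_pow hn.ne'] at han
        exact one_ne_zero han.symm
      have haq : a ^ (q - 1) = 1 := FiniteField.pow_card_sub_one_eq_one a ha0
      have : orderOf a ∣ g :=
        Nat.dvd_gcd (orderOf_dvd_of_pow_eq_one han) (orderOf_dvd_of_pow_eq_one haq)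
      exact orderOf_dvd_iff_pow_eq_one.mp this
    · intro hag
      obtain ⟨c, hc⟩ := Nat.gcd_dvd_left n (q - 1)
      rw [hc, pow_mul, hag, one_pow]
  rw [hroots, hcardg]

theorem key_count {K : Type*} [Field K] [Fintype K] [DecidableEq K] {m : ℕ} (hm : 0 < m) :
    ∃ k : ℕ, Wpoly ((X : K[X]) ^ m - 1) = 2 ^ k ∧
      2 * k ≤ m + Nat.gcd m (Fintype.card K - 1) ∧ k ≤ m ∧
      (k = m ↔ m ∣ Fintype.card K - 1) := by
  classical
  set q := Fintype.card K with hq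
  have hq1 : 1 < q := Fintype.one_lt_card
  set p := ringChar K with hp
  haveI : CharP K p := ringChar.charP K
  obtain ⟨kk, hpp, hcard⟩ := FiniteField.card K p
  haveI := Fact.mk hpp
  have hpq1 : ¬ p ∣ q - 1 := by
    intro h
    have hpq : p ∣ q := by rw [hq, hcard]; exact dvd_pow_self p kk.ne_zero
    have : p ∣ 1 := by
      have := Nat.dvd_sub hpq h
      rwa [Nat.sub_sub_self hq1.le] at this
    exact hpp.one_lt.ne' (Nat.dvd_one.mp this)
  set s := m.factorization p with hs
  set m' := m / p ^ s with hm'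
  have hmeq : p ^ s * m' = m := Nat.ordProj_mul_ordCompl_eq_self m p
  have hpm' : ¬ p ∣ m' := Nat.not_dvd_ordCompl hpp hm.ne'
  have hm'0 : 0 < m' := Nat.ordCompl_pos p hm.ne'
  have hm'm : m' ≤ m := Nat.div_le_self m (p ^ s)
  -- the squarefree part
  set F : K[X] := X ^ m' - 1 with hF
  have hFmon : F.Monic := by
    have := monic_X_pow_sub_C (1 : K) hm'0.ne'
    rwa [map_one] at this
  have hFsep : F.Separable := by
    have hc : (m' : K) ≠ 0 := fun h => hpm' ((CharP.cast_eq_zero_iff K p m').mp h)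
    have := separable_X_pow_sub_C (1 : K) hc one_ne_zero
    rwa [map_one] at this
  have hFsq : Squarefree F := hFsep.squarefree
  have hF0 : F ≠ 0 := hFmon.ne_zero
  -- X^m - 1 = F ^ (p ^ s)
  have hpow : (X : K[X]) ^ m - 1 = F ^ p ^ s := by
    rw [hF, sub_pow_expChar_pow, ← pow_mul, one_pow, mul_comm, hmeq]
  -- Wpoly equality
  have hWeq : Wpoly ((X : K[X]) ^ m - 1) = Wpoly F := by
    apply Nat.card_congr
    apply Equiv.subtypeEquivRight
    intro g
    constructor
    · rintro ⟨h1, h2, h3⟩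
      refine ⟨h1, h2, ?_⟩
      rw [hpow] at h3
      exact ((isRadical_iff_squarefree_or_zero.mpr (Or.inl h2)) _ _ h3)
    · rintro ⟨h1, h2, h3⟩
      exact ⟨h1, h2, hpow ▸ h3.trans (dvd_pow_self F (pow_ne_zero s hpp.pos.ne'))⟩
  set S := (normalizedFactors F).toFinset with hS
  set k := S.card with hk
  refine ⟨k, by rw [hWeq, Wpoly_eq_pow hFmon hFsq], ?_⟩
  -- degree sum
  have hdegsum : ∑ pp ∈ S, pp.natDegree = m' := by
    rw [sum_natDegree_nf hFmon hFsq, hF]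
    have : (X ^ m' - 1 : K[X]) = X ^ m' - C 1 := by rw [map_one]
    rw [this]
    exact natDegree_X_pow_sub_C
  -- linear count
  set L := Nat.gcd m (q - 1) with hL
  have hLm' : Nat.gcd m' (q - 1) = L := by
    rw [hL, ← hmeq]
    exact (Nat.Coprime.gcd_mul_left_cancel m'
      (Nat.Coprime.pow_left _ (hpp.coprime_iff_not_dvd.mpr hpq1))).symm
  have hLlin : (S.filter (fun pp => pp.natDegree = 1)).card = L := by
    rw [card_filter_linear hFmon hFsq,
      Multiset.toFinset_card_of_nodup (nodup_roots hFsep), hF,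
      card_roots_X_pow_sub_one hm'0 hpm', ← hq, hLm']
  have hdegpos : ∀ pp ∈ S, 1 ≤ pp.natDegree := fun pp hpp' =>
    ((mem_nf_iff hF0).mp hpp').1.natDegree_pos
  have hsplit : (S.filter (fun pp => pp.natDegree = 1)).card +
      (S.filter (fun pp => ¬ pp.natDegree = 1)).card = k :=
    Finset.card_filter_add_card_filter_not _
  have hsum_split : ∑ pp ∈ S.filter (fun pp => pp.natDegree = 1), pp.natDegree +
      ∑ pp ∈ S.filter (fun pp => ¬ pp.natDegree = 1), pp.natDegree = m' := by
    rw [Finset.sum_filter_add_sum_filter_not, hdegsum]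
  have hsum1 : ∑ pp ∈ S.filter (fun pp => pp.natDegree = 1), pp.natDegree =
      (S.filter (fun pp => pp.natDegree = 1)).card := by
    rw [Finset.card_eq_sum_ones]
    apply Finset.sum_congr rfl
    intro pp hpp'
    exact (Finset.mem_filter.mp hpp').2
  have hsum2 : 2 * (S.filter (fun pp => ¬ pp.natDegree = 1)).card ≤
      ∑ pp ∈ S.filter (fun pp => ¬ pp.natDegree = 1), pp.natDegree := by
    rw [Finset.card_eq_sum_ones, Finset.mul_sum]
    apply Finset.sum_le_sum
    intro pp hpp'
    have h1 := hdegpos pp (Finset.mem_filter.mp hpp').1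
    have h2 := (Finset.mem_filter.mp hpp').2
    omega
  -- main bounds
  have hmain : 2 * k ≤ m' + L := by omega
  have hLk : L ≤ k := by
    rw [← hLlin, ← hsplit]; omega
  refine ⟨by omega, by omega, ?_⟩
  constructor
  · intro hkm
    have hLgm : L = m := by omega
    have : m ∣ q - 1 := hLgm ▸ Nat.gcd_dvd_right m (q - 1)
    exact this
  · intro hdvd
    have hpm : ¬ p ∣ m := fun h => hpq1 (h.trans hdvd)
    have hs0 : s = 0 := by
      rw [hs]
      exact Nat.factorization_eq_zero_of_not_dvd hpm
    have hm'em : m' = m := by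
      rw [hm', hs0, pow_zero, Nat.div_one]
    have hLem : L = m := by
      rw [hL]
      exact Nat.gcd_eq_left hdvd
    -- sum over non-linear part must be zero
    have h2 : ∑ pp ∈ S.filter (fun pp => ¬ pp.natDegree = 1), pp.natDegree = 0 := by omega
    have h3 : (S.filter (fun pp => ¬ pp.natDegree = 1)).card = 0 := by omega
    omega

end Aux

/-- bounds on the number of monic squarefree divisors of `x^m - 1` over `F_q`. -/
theorem statement6 (q m : ℕ) (hm : 0 < m) {K : Type*} [Field K] [Fintype K]
    (hq : Fintype.card K = q) :
    (Wpoly ((X : K[X]) ^ m - 1) : ℝ) ≤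
        (2 : ℝ) ^ (((m : ℝ) + (Nat.gcd m (q - 1) : ℝ)) / 2) ∧
      Wpoly ((X : K[X]) ^ m - 1) ≤ 2 ^ m ∧
      (Wpoly ((X : K[X]) ^ m - 1) = 2 ^ m ↔ m ∣ q - 1) ∧
      (¬ m ∣ q - 1 → (Wpoly ((X : K[X]) ^ m - 1) : ℝ) ≤ (2 : ℝ) ^ (3 * (m : ℝ) / 4)) := by
  classical
  subst hq
  obtain ⟨k, hW, h2k, hkm, hiff⟩ := key_count (K := K) hm
  set g := Nat.gcd m (Fintype.card K - 1) with hg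
  have h1 : (Wpoly ((X : K[X]) ^ m - 1) : ℝ) ≤
      (2 : ℝ) ^ (((m : ℝ) + (g : ℝ)) / 2) := by
    rw [hW]
    push_cast
    rw [← Real.rpow_natCast 2 k]
    apply Real.rpow_le_rpow_of_exponent_le one_le_two
    have : (2 * k : ℝ) ≤ (m : ℝ) + (g : ℝ) := by exact_mod_cast h2k
    linarith
  have h2 : Wpoly ((X : K[X]) ^ m - 1) ≤ 2 ^ m := by
    rw [hW]
    exact Nat.pow_le_pow_right (by norm_num) hkm
  refine ⟨h1, h2, ?_, ?_⟩
  · rw [hW]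
    constructor
    · intro h
      exact hiff.mp (Nat.pow_right_injective (le_refl 2) h)
    · intro h
      rw [hiff.mpr h]
  · intro hnd
    have hgm : g ∣ m := Nat.gcd_dvd_left _ _
    have hgne : g ≠ m := by
      intro h
      exact hnd (h ▸ Nat.gcd_dvd_right m (Fintype.card K - 1))
    have h2g : 2 * g ≤ m := by
      obtain ⟨c, hc⟩ := hgm
      have hc2 : 2 ≤ c := by
        rcases Nat.lt_or_ge c 2 with hlt | hge
        · interval_cases c
          · omega
          · simp at hc; omega
        · exact hge
      calc 2 * g = g * 2 := by ring
        _ ≤ g * c := Nat.mul_le_mul_left g hc2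
        _ = m := hc.symm
    calc (Wpoly ((X : K[X]) ^ m - 1) : ℝ) ≤ (2 : ℝ) ^ (((m : ℝ) + (g : ℝ)) / 2) := h1
      _ ≤ (2 : ℝ) ^ (3 * (m : ℝ) / 4) := by
          apply Real.rpow_le_rpow_of_exponent_le one_le_two
          have : (2 * g : ℝ) ≤ (m : ℝ) := by exact_mod_cast h2g
          linarith
end

section
/- For every integer t ≥ 3, W(t − 1) < t^{0.96/log log t}, where log denotes the natural logarithm. -/
open Polynomial

lemma wnat_eq {n : ℕ} (hn : n ≠ 0) : Wnat n = 2 ^ n.primeFactors.card := by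
  have h := Nat.divisors_filter_squarefree hn
  have h2 : (n.divisors.filter Squarefree).card
      = (UniqueFactorizationMonoid.normalizedFactors n).toFinset.powerset.card := by
    rw [Finset.card, h, Multiset.card_map]; rfl
  rw [Wnat, h2, Finset.card_powerset, Nat.factors_eq]
  rfl

noncomputable def prim (k : ℕ) : ℕ := ∏ i ∈ Finset.range k, Nat.nth Nat.Prime i

lemma prim_succ (k : ℕ) : prim (k+1) = prim k * Nat.nth Nat.Prime k := by
  rw [prim, Finset.prod_range_succ]; rfl

lemma prim_pos (k : ℕ) : 0 < prim k :=
  Finset.prod_pos fun i _ => (Nat.prime_nth_prime i).pos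

lemma prim_le_prod_aux (k : ℕ) : ∀ S : Finset ℕ, (∀ p ∈ S, p.Prime) → S.card = k →
    prim k ≤ ∏ p ∈ S, p := by
  induction k with
  | zero =>
    intro S hS _
    have h1 : prim 0 = 1 := by simp [prim]
    rw [h1]
    exact Finset.one_le_prod' fun p hp => (hS p hp).one_lt.le
  | succ k ih =>
    intro S hS hn
    have hne : S.Nonempty := Finset.card_pos.mp (by omega)
    set m := S.max' hne with hm
    have hmS : m ∈ S := S.max'_mem hne
    have hcount : k < Nat.count Nat.Prime (m+1) := by
      have hsub : S ⊆ (m+1).primesBelow := by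
        intro p hp
        exact Nat.mem_primesBelow.mpr ⟨Nat.lt_succ_of_le (S.le_max' p hp), hS p hp⟩
      have h3 := Finset.card_le_card hsub
      rw [Nat.primesBelow_card_eq_primeCounting'] at h3
      have : k + 1 ≤ Nat.count Nat.Prime (m+1) := by rw [← hn]; exact h3
      omega
    have hnth : Nat.nth Nat.Prime k ≤ m := by
      have := Nat.nth_lt_of_lt_count hcount
      omega
    have hcard : (S.erase m).card = k := by
      rw [Finset.card_erase_of_mem hmS, hn]; rfl
    have hrec := ih (S.erase m) (fun p hp => hS p (Finset.mem_of_mem_erase hp)) hcard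
    rw [prim_succ, ← Finset.mul_prod_erase S _ hmS]
    calc prim k * Nat.nth Nat.Prime k ≤ (∏ p ∈ S.erase m, p) * m :=
          Nat.mul_le_mul hrec hnth
      _ = m * ∏ p ∈ S.erase m, p := mul_comm _ _

lemma prim_le {n : ℕ} (hn : n ≠ 0) : prim n.primeFactors.card ≤ n := by
  refine le_trans (prim_le_prod_aux _ n.primeFactors (fun p hp => Nat.prime_of_mem_primeFactors hp) rfl) ?_
  exact Nat.le_of_dvd (Nat.pos_of_ne_zero hn) (Nat.prod_primeFactors_dvd n)

lemma nth_prime_lb {i : ℕ} (hi : 25 ≤ i) (h101 : Nat.nth Nat.Prime 25 = 101) :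
    15 * i ≤ 4 * Nat.nth Nat.Prime i + 135 := by
  set p := Nat.nth Nat.Prime i with hp
  have hp101 : 101 ≤ p := by
    rw [← h101, hp]
    exact Nat.nth_monotone Nat.infinite_setOf_prime hi
  have hcount : Nat.count Nat.Prime (p+1) = i + 1 := by
    rw [Nat.count_succ, Nat.count_nth_of_infinite Nat.infinite_setOf_prime, if_pos]
    exact Nat.prime_nth_prime i
  have hkey := Nat.primeCounting'_add_le (a := 30) (k := 31) (by norm_num) (by norm_num) (p - 30)
  have h31 : (31 : ℕ).primeCounting' = 10 := by decide
  have htot : Nat.totient 30 = 8 := by decide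
  have heq : 31 + (p - 30) = p + 1 := by omega
  rw [heq, h31, htot] at hkey
  have hpc : (p+1).primeCounting' = Nat.count Nat.Prime (p+1) := rfl
  rw [hpc, hcount] at hkey
  have hdiv : (p - 30) / 30 * 30 ≤ p - 30 := Nat.div_mul_le_self _ _
  omega


-- rational lower bound for log of a real ≥ 1 via powers of 2
lemma log_lb (y : ℝ) (M E : ℕ) (hE : 0 < E) (h2 : (2:ℝ)^M ≤ y^E) (hy : 1 ≤ y) :
    (M:ℝ) * 0.6931471803 / E ≤ Real.log y := by
  have hlog : (M:ℝ) * Real.log 2 ≤ (E:ℝ) * Real.log y := by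
    have := Real.log_le_log (by positivity) h2
    rwa [Real.log_pow, Real.log_pow] at this
  have hl2 : (0.6931471803:ℝ) ≤ Real.log 2 := Real.log_two_gt_d9.le
  rw [div_le_iff₀ (by exact_mod_cast hE)]
  nlinarith [Real.log_nonneg hy, Nat.cast_nonneg (α := ℝ) M, Nat.cast_nonneg (α := ℝ) E]

lemma log_ub (y : ℝ) (M E : ℕ) (hE : 0 < E) (h2 : y^E ≤ (2:ℝ)^M) (hy : 0 < y) :
    Real.log y ≤ (M:ℝ) * 0.6931471808 / E := by
  have hlog : (E:ℝ) * Real.log y ≤ (M:ℝ) * Real.log 2 := by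
    have := Real.log_le_log (by positivity) h2
    rwa [Real.log_pow, Real.log_pow] at this
  have hl2 : Real.log 2 ≤ (0.6931471808:ℝ) := Real.log_two_lt_d9.le
  rw [le_div_iff₀ (by exact_mod_cast hE)]
  nlinarith [Nat.cast_nonneg (α := ℝ) M, Real.log_pos (by norm_num : (1:ℝ) < 2)]

-- monotone transfer lemma
lemma mono_transfer {c L0 L : ℝ} (h1 : 1 ≤ L0) (hL : L0 ≤ L) (hc : 0 ≤ c)
    (h2 : c ≤ 0.96 * L0) (h3 : c * Real.log L0 < 0.96 * L0) :
    c * Real.log L < 0.96 * L := by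
  have hL0 : (0:ℝ) < L0 := by linarith
  have hdiv : Real.log L - Real.log L0 ≤ L / L0 - 1 := by
    have h4 : Real.log (L / L0) ≤ L / L0 - 1 :=
      Real.log_le_sub_one_of_pos (div_pos (by linarith) hL0)
    rwa [Real.log_div (by linarith) (by linarith)] at h4
  have h5 : L0 * (L / L0) = L := by field_simp
  have h6 : 1 ≤ L / L0 := (one_le_div hL0).mpr hL
  nlinarith [mul_le_mul_of_nonneg_left hdiv hc]


-- nth prime values
lemma nth_eq {i p : ℕ} (hp : p.Prime) (hc : Nat.count Nat.Prime p = i) : Nat.nth Nat.Prime i = p := hc ▸ Nat.nth_count hp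

lemma nthP0 : Nat.nth Nat.Prime 0 = 2 := nth_eq (by norm_num) (by decide)
lemma nthP1 : Nat.nth Nat.Prime 1 = 3 := nth_eq (by norm_num) (by decide)
lemma nthP2 : Nat.nth Nat.Prime 2 = 5 := nth_eq (by norm_num) (by decide)
lemma nthP3 : Nat.nth Nat.Prime 3 = 7 := nth_eq (by norm_num) (by decide)
lemma nthP4 : Nat.nth Nat.Prime 4 = 11 := nth_eq (by norm_num) (by decide)
lemma nthP5 : Nat.nth Nat.Prime 5 = 13 := nth_eq (by norm_num) (by decide)
lemma nthP6 : Nat.nth Nat.Prime 6 = 17 := nth_eq (by norm_num) (by decide)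
lemma nthP7 : Nat.nth Nat.Prime 7 = 19 := nth_eq (by norm_num) (by decide)
lemma nthP8 : Nat.nth Nat.Prime 8 = 23 := nth_eq (by norm_num) (by decide)
lemma nthP9 : Nat.nth Nat.Prime 9 = 29 := nth_eq (by norm_num) (by decide)
lemma nthP10 : Nat.nth Nat.Prime 10 = 31 := nth_eq (by norm_num) (by decide)
lemma nthP11 : Nat.nth Nat.Prime 11 = 37 := nth_eq (by norm_num) (by decide)
lemma nthP12 : Nat.nth Nat.Prime 12 = 41 := nth_eq (by norm_num) (by decide)
lemma nthP13 : Nat.nth Nat.Prime 13 = 43 := nth_eq (by norm_num) (by decide)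
lemma nthP14 : Nat.nth Nat.Prime 14 = 47 := nth_eq (by norm_num) (by decide)
lemma nthP15 : Nat.nth Nat.Prime 15 = 53 := nth_eq (by norm_num) (by decide)
lemma nthP16 : Nat.nth Nat.Prime 16 = 59 := nth_eq (by norm_num) (by decide)
lemma nthP17 : Nat.nth Nat.Prime 17 = 61 := nth_eq (by norm_num) (by decide)
lemma nthP18 : Nat.nth Nat.Prime 18 = 67 := nth_eq (by norm_num) (by decide)
lemma nthP19 : Nat.nth Nat.Prime 19 = 71 := nth_eq (by norm_num) (by decide)
lemma nthP20 : Nat.nth Nat.Prime 20 = 73 := nth_eq (by norm_num) (by decide)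
lemma nthP21 : Nat.nth Nat.Prime 21 = 79 := nth_eq (by norm_num) (by decide)
lemma nthP22 : Nat.nth Nat.Prime 22 = 83 := nth_eq (by norm_num) (by decide)
lemma nthP23 : Nat.nth Nat.Prime 23 = 89 := nth_eq (by norm_num) (by decide)
set_option maxRecDepth 10000 in
lemma nthP24 : Nat.nth Nat.Prime 24 = 97 := nth_eq (by norm_num) (by decide)
set_option maxRecDepth 10000 in
lemma nthP25 : Nat.nth Nat.Prime 25 = 101 := nth_eq (by norm_num) (by decide)

lemma primV1 : prim 1 = 2 := by rw [show (1:ℕ) = 0+1 from rfl, prim_succ, nthP0]; simp [prim]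
lemma primV2 : prim 2 = 6 := by rw [show (2:ℕ) = 1+1 from rfl, prim_succ, primV1 , nthP1]
lemma primV3 : prim 3 = 30 := by rw [show (3:ℕ) = 2+1 from rfl, prim_succ, primV2 , nthP2]
lemma primV4 : prim 4 = 210 := by rw [show (4:ℕ) = 3+1 from rfl, prim_succ, primV3 , nthP3]
lemma primV5 : prim 5 = 2310 := by rw [show (5:ℕ) = 4+1 from rfl, prim_succ, primV4 , nthP4]
lemma primV6 : prim 6 = 30030 := by rw [show (6:ℕ) = 5+1 from rfl, prim_succ, primV5 , nthP5]
lemma primV7 : prim 7 = 510510 := by rw [show (7:ℕ) = 6+1 from rfl, prim_succ, primV6 , nthP6]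
lemma primV8 : prim 8 = 9699690 := by rw [show (8:ℕ) = 7+1 from rfl, prim_succ, primV7 , nthP7]
lemma primV9 : prim 9 = 223092870 := by rw [show (9:ℕ) = 8+1 from rfl, prim_succ, primV8 , nthP8]
lemma primV10 : prim 10 = 6469693230 := by rw [show (10:ℕ) = 9+1 from rfl, prim_succ, primV9 , nthP9]
lemma primV11 : prim 11 = 200560490130 := by rw [show (11:ℕ) = 10+1 from rfl, prim_succ, primV10 , nthP10]
lemma primV12 : prim 12 = 7420738134810 := by rw [show (12:ℕ) = 11+1 from rfl, prim_succ, primV11 , nthP11]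
lemma primV13 : prim 13 = 304250263527210 := by rw [show (13:ℕ) = 12+1 from rfl, prim_succ, primV12 , nthP12]
lemma primV14 : prim 14 = 13082761331670030 := by rw [show (14:ℕ) = 13+1 from rfl, prim_succ, primV13 , nthP13]
lemma primV15 : prim 15 = 614889782588491410 := by rw [show (15:ℕ) = 14+1 from rfl, prim_succ, primV14 , nthP14]
lemma primV16 : prim 16 = 32589158477190044730 := by rw [show (16:ℕ) = 15+1 from rfl, prim_succ, primV15 , nthP15]
lemma primV17 : prim 17 = 1922760350154212639070 := by rw [show (17:ℕ) = 16+1 from rfl, prim_succ, primV16 , nthP16]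
lemma primV18 : prim 18 = 117288381359406970983270 := by rw [show (18:ℕ) = 17+1 from rfl, prim_succ, primV17 , nthP17]
lemma primV19 : prim 19 = 7858321551080267055879090 := by rw [show (19:ℕ) = 18+1 from rfl, prim_succ, primV18 , nthP18]
lemma primV20 : prim 20 = 557940830126698960967415390 := by rw [show (20:ℕ) = 19+1 from rfl, prim_succ, primV19 , nthP19]
lemma primV21 : prim 21 = 40729680599249024150621323470 := by rw [show (21:ℕ) = 20+1 from rfl, prim_succ, primV20 , nthP20]
lemma primV22 : prim 22 = 3217644767340672907899084554130 := by rw [show (22:ℕ) = 21+1 from rfl, prim_succ, primV21 , nthP21]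
lemma primV23 : prim 23 = 267064515689275851355624017992790 := by rw [show (23:ℕ) = 22+1 from rfl, prim_succ, primV22 , nthP22]
lemma primV24 : prim 24 = 23768741896345550770650537601358310 := by rw [show (24:ℕ) = 23+1 from rfl, prim_succ, primV23 , nthP23]
lemma primV25 : prim 25 = 2305567963945518424753102147331756070 := by rw [show (25:ℕ) = 24+1 from rfl, prim_succ, primV24 , nthP24]
lemma primV26 : prim 26 = 232862364358497360900063316880507363070 := by rw [show (26:ℕ) = 25+1 from rfl, prim_succ, primV25 , nthP25]

lemma two_pow_split (M : ℕ) : (2:ℝ)^M = ((2:ℝ)^16)^(M/16) * 2^(M%16) := by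
  rw [← pow_mul, ← pow_add, Nat.div_add_mod]

lemma pow_split (x : ℝ) (n k : ℕ) : x^n = (x^k)^(n/k) * x^(n%k) := by
  rw [← pow_mul, ← pow_add, Nat.div_add_mod]

set_option maxHeartbeats 4000000 in
lemma tail_ineq (j : ℝ) (hj : 16 ≤ j) :
    ((j+10) * Real.log 2) * Real.log (j * Real.log j + 0.3*j + 37) < 0.96 * (j * Real.log j + 0.3*j + 37) := by
  have hlog2u := Real.log_two_lt_d9
  have hlog2nn : (0:ℝ) ≤ Real.log 2 := (Real.log_pos (by norm_num)).le
  have hj0 : (0:ℝ) < j := by linarith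
  have hv0 : (0:ℝ) ≤ Real.log j := Real.log_nonneg (by linarith)
  have hL0pos : (1:ℝ) ≤ j * Real.log j + 0.3*j + 37 := by nlinarith
  have hlogL0nn : (0:ℝ) ≤ Real.log (j * Real.log j + 0.3*j + 37) := Real.log_nonneg hL0pos
  have hj10 : (0:ℝ) ≤ j + 10 := by linarith
  by_cases hcase0 : j ≤ 18
  · have hu1 : (1024:ℝ) * 0.6931471803 / 256 ≤ Real.log j :=
      le_trans (by simpa using log_lb (16:ℝ) 1024 256 (by norm_num) (by rw [two_pow_split]; norm_num) (by norm_num)) (Real.log_le_log (by norm_num) hj)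
    have hu2 : Real.log j ≤ (1068:ℝ) * 0.6931471808 / 256 :=
      le_trans (Real.log_le_log hj0 hcase0) (by simpa using log_ub (18:ℝ) 1068 256 (by norm_num) (by rw [two_pow_split]; norm_num) (by norm_num))
    have hY : j * Real.log j + 0.3*j + 37 ≤ (472255105541/5000000000 : ℝ) := by nlinarith
    have hrho : Real.log (j * Real.log j + 0.3*j + 37) ≤ (1680:ℝ) * 0.6931471808 / 256 :=
      le_trans (Real.log_le_log (by linarith) hY) (by simpa using log_ub (472255105541/5000000000 : ℝ) 1680 256 (by norm_num) (by rw [two_pow_split]; norm_num) (by norm_num))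
    have hju1 : j * ((1024:ℝ) * 0.6931471803 / 256) ≤ j * Real.log j :=
      mul_le_mul_of_nonneg_left hu1 (le_of_lt hj0)
    have hp1 : Real.log 2 * Real.log (j * Real.log j + 0.3*j + 37) ≤ 0.6931471808 * ((1680:ℝ) * 0.6931471808 / 256) :=
      mul_le_mul hlog2u.le hrho hlogL0nn (by norm_num)
    have hp2 : ((j+10) * Real.log 2) * Real.log (j * Real.log j + 0.3*j + 37) ≤ (j+10) * (0.6931471808 * ((1680:ℝ) * 0.6931471808 / 256)) := by
      rw [mul_assoc]
      exact mul_le_mul_of_nonneg_left hp1 hj10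
    nlinarith [hp2, hju1]
  by_cases hcase1 : j ≤ 20
  · have hu1 : (1067:ℝ) * 0.6931471803 / 256 ≤ Real.log j :=
      le_trans (by simpa using log_lb (18:ℝ) 1067 256 (by norm_num) (by rw [two_pow_split]; norm_num) (by norm_num)) (Real.log_le_log (by norm_num) (by linarith : (18:ℝ) ≤ j))
    have hu2 : Real.log j ≤ (1107:ℝ) * 0.6931471808 / 256 :=
      le_trans (Real.log_le_log hj0 hcase1) (by simpa using log_ub (20:ℝ) 1107 256 (by norm_num) (by rw [two_pow_split]; norm_num) (by norm_num))
    have hY : j * Real.log j + 0.3*j + 37 ≤ (205892801429/2000000000 : ℝ) := by nlinarith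
    have hrho : Real.log (j * Real.log j + 0.3*j + 37) ≤ (1712:ℝ) * 0.6931471808 / 256 :=
      le_trans (Real.log_le_log (by linarith) hY) (by simpa using log_ub (205892801429/2000000000 : ℝ) 1712 256 (by norm_num) (by rw [two_pow_split]; norm_num) (by norm_num))
    have hju1 : j * ((1067:ℝ) * 0.6931471803 / 256) ≤ j * Real.log j :=
      mul_le_mul_of_nonneg_left hu1 (le_of_lt hj0)
    have hp1 : Real.log 2 * Real.log (j * Real.log j + 0.3*j + 37) ≤ 0.6931471808 * ((1712:ℝ) * 0.6931471808 / 256) :=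
      mul_le_mul hlog2u.le hrho hlogL0nn (by norm_num)
    have hp2 : ((j+10) * Real.log 2) * Real.log (j * Real.log j + 0.3*j + 37) ≤ (j+10) * (0.6931471808 * ((1712:ℝ) * 0.6931471808 / 256)) := by
      rw [mul_assoc]
      exact mul_le_mul_of_nonneg_left hp1 hj10
    nlinarith [hp2, hju1]
  by_cases hcase2 : j ≤ 22
  · have hu1 : (1106:ℝ) * 0.6931471803 / 256 ≤ Real.log j :=
      le_trans (by simpa using log_lb (20:ℝ) 1106 256 (by norm_num) (by rw [two_pow_split]; norm_num) (by norm_num)) (Real.log_le_log (by norm_num) (by linarith : (20:ℝ) ≤ j))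
    have hu2 : Real.log j ≤ (1142:ℝ) * 0.6931471808 / 256 :=
      le_trans (Real.log_le_log hj0 hcase2) (by simpa using log_ub (22:ℝ) 1142 256 (by norm_num) (by rw [two_pow_split]; norm_num) (by norm_num))
    have hY : j * Real.log j + 0.3*j + 37 ≤ (1116258975407/10000000000 : ℝ) := by nlinarith
    have hrho : Real.log (j * Real.log j + 0.3*j + 37) ≤ (1742:ℝ) * 0.6931471808 / 256 :=
      le_trans (Real.log_le_log (by linarith) hY) (by simpa using log_ub (1116258975407/10000000000 : ℝ) 1742 256 (by norm_num) (by rw [two_pow_split]; norm_num) (by norm_num))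
    have hju1 : j * ((1106:ℝ) * 0.6931471803 / 256) ≤ j * Real.log j :=
      mul_le_mul_of_nonneg_left hu1 (le_of_lt hj0)
    have hp1 : Real.log 2 * Real.log (j * Real.log j + 0.3*j + 37) ≤ 0.6931471808 * ((1742:ℝ) * 0.6931471808 / 256) :=
      mul_le_mul hlog2u.le hrho hlogL0nn (by norm_num)
    have hp2 : ((j+10) * Real.log 2) * Real.log (j * Real.log j + 0.3*j + 37) ≤ (j+10) * (0.6931471808 * ((1742:ℝ) * 0.6931471808 / 256)) := by
      rw [mul_assoc]
      exact mul_le_mul_of_nonneg_left hp1 hj10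
    nlinarith [hp2, hju1]
  by_cases hcase3 : j ≤ 24
  · have hu1 : (1141:ℝ) * 0.6931471803 / 256 ≤ Real.log j :=
      le_trans (by simpa using log_lb (22:ℝ) 1141 256 (by norm_num) (by rw [two_pow_split]; norm_num) (by norm_num)) (Real.log_le_log (by norm_num) (by linarith : (22:ℝ) ≤ j))
    have hu2 : Real.log j ≤ (1174:ℝ) * 0.6931471808 / 256 :=
      le_trans (Real.log_le_log hj0 hcase3) (by simpa using log_ub (24:ℝ) 1174 256 (by norm_num) (by rw [two_pow_split]; norm_num) (by norm_num))
    have hY : j * Real.log j + 0.3*j + 37 ≤ (301223778967/2500000000 : ℝ) := by nlinarith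
    have hrho : Real.log (j * Real.log j + 0.3*j + 37) ≤ (1770:ℝ) * 0.6931471808 / 256 :=
      le_trans (Real.log_le_log (by linarith) hY) (by simpa using log_ub (301223778967/2500000000 : ℝ) 1770 256 (by norm_num) (by rw [two_pow_split]; norm_num) (by norm_num))
    have hju1 : j * ((1141:ℝ) * 0.6931471803 / 256) ≤ j * Real.log j :=
      mul_le_mul_of_nonneg_left hu1 (le_of_lt hj0)
    have hp1 : Real.log 2 * Real.log (j * Real.log j + 0.3*j + 37) ≤ 0.6931471808 * ((1770:ℝ) * 0.6931471808 / 256) :=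
      mul_le_mul hlog2u.le hrho hlogL0nn (by norm_num)
    have hp2 : ((j+10) * Real.log 2) * Real.log (j * Real.log j + 0.3*j + 37) ≤ (j+10) * (0.6931471808 * ((1770:ℝ) * 0.6931471808 / 256)) := by
      rw [mul_assoc]
      exact mul_le_mul_of_nonneg_left hp1 hj10
    nlinarith [hp2, hju1]
  by_cases hcase4 : j ≤ 26
  · have hu1 : (1173:ℝ) * 0.6931471803 / 256 ≤ Real.log j :=
      le_trans (by simpa using log_lb (24:ℝ) 1173 256 (by norm_num) (by rw [two_pow_split]; norm_num) (by norm_num)) (Real.log_le_log (by norm_num) (by linarith : (24:ℝ) ≤ j))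
    have hu2 : Real.log j ≤ (1204:ℝ) * 0.6931471808 / 256 :=
      le_trans (Real.log_le_log hj0 hcase4) (by simpa using log_ub (26:ℝ) 1204 256 (by norm_num) (by rw [two_pow_split]; norm_num) (by norm_num))
    have hY : j * Real.log j + 0.3*j + 37 ≤ (647794518511/5000000000 : ℝ) := by nlinarith
    have hrho : Real.log (j * Real.log j + 0.3*j + 37) ≤ (1797:ℝ) * 0.6931471808 / 256 :=
      le_trans (Real.log_le_log (by linarith) hY) (by simpa using log_ub (647794518511/5000000000 : ℝ) 1797 256 (by norm_num) (by rw [two_pow_split]; norm_num) (by norm_num))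
    have hju1 : j * ((1173:ℝ) * 0.6931471803 / 256) ≤ j * Real.log j :=
      mul_le_mul_of_nonneg_left hu1 (le_of_lt hj0)
    have hp1 : Real.log 2 * Real.log (j * Real.log j + 0.3*j + 37) ≤ 0.6931471808 * ((1797:ℝ) * 0.6931471808 / 256) :=
      mul_le_mul hlog2u.le hrho hlogL0nn (by norm_num)
    have hp2 : ((j+10) * Real.log 2) * Real.log (j * Real.log j + 0.3*j + 37) ≤ (j+10) * (0.6931471808 * ((1797:ℝ) * 0.6931471808 / 256)) := by
      rw [mul_assoc]
      exact mul_le_mul_of_nonneg_left hp1 hj10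
    nlinarith [hp2, hju1]
  by_cases hcase5 : j ≤ 29
  · have hu1 : (1203:ℝ) * 0.6931471803 / 256 ≤ Real.log j :=
      le_trans (by simpa using log_lb (26:ℝ) 1203 256 (by norm_num) (by rw [two_pow_split]; norm_num) (by norm_num)) (Real.log_le_log (by norm_num) (by linarith : (26:ℝ) ≤ j))
    have hu2 : Real.log j ≤ (1244:ℝ) * 0.6931471808 / 256 :=
      le_trans (Real.log_le_log hj0 hcase5) (by simpa using log_ub (29:ℝ) 1244 256 (by norm_num) (by rw [two_pow_split]; norm_num) (by norm_num))
    have hY : j * Real.log j + 0.3*j + 37 ≤ (1433796003693/10000000000 : ℝ) := by nlinarith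
    have hrho : Real.log (j * Real.log j + 0.3*j + 37) ≤ (1834:ℝ) * 0.6931471808 / 256 :=
      le_trans (Real.log_le_log (by linarith) hY) (by simpa using log_ub (1433796003693/10000000000 : ℝ) 1834 256 (by norm_num) (by rw [two_pow_split]; norm_num) (by norm_num))
    have hju1 : j * ((1203:ℝ) * 0.6931471803 / 256) ≤ j * Real.log j :=
      mul_le_mul_of_nonneg_left hu1 (le_of_lt hj0)
    have hp1 : Real.log 2 * Real.log (j * Real.log j + 0.3*j + 37) ≤ 0.6931471808 * ((1834:ℝ) * 0.6931471808 / 256) :=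
      mul_le_mul hlog2u.le hrho hlogL0nn (by norm_num)
    have hp2 : ((j+10) * Real.log 2) * Real.log (j * Real.log j + 0.3*j + 37) ≤ (j+10) * (0.6931471808 * ((1834:ℝ) * 0.6931471808 / 256)) := by
      rw [mul_assoc]
      exact mul_le_mul_of_nonneg_left hp1 hj10
    nlinarith [hp2, hju1]
  by_cases hcase6 : j ≤ 32
  · have hu1 : (1243:ℝ) * 0.6931471803 / 256 ≤ Real.log j :=
      le_trans (by simpa using log_lb (29:ℝ) 1243 256 (by norm_num) (by rw [two_pow_split]; norm_num) (by norm_num)) (Real.log_le_log (by norm_num) (by linarith : (29:ℝ) ≤ j))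
    have hu2 : Real.log j ≤ (1280:ℝ) * 0.6931471808 / 256 :=
      le_trans (Real.log_le_log hj0 hcase6) (by simpa using log_ub (32:ℝ) 1280 256 (by norm_num) (by rw [two_pow_split]; norm_num) (by norm_num))
    have hY : j * Real.log j + 0.3*j + 37 ≤ (307624119/1953125 : ℝ) := by nlinarith
    have hrho : Real.log (j * Real.log j + 0.3*j + 37) ≤ (1869:ℝ) * 0.6931471808 / 256 :=
      le_trans (Real.log_le_log (by linarith) hY) (by simpa using log_ub (307624119/1953125 : ℝ) 1869 256 (by norm_num) (by rw [two_pow_split]; norm_num) (by norm_num))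
    have hju1 : j * ((1243:ℝ) * 0.6931471803 / 256) ≤ j * Real.log j :=
      mul_le_mul_of_nonneg_left hu1 (le_of_lt hj0)
    have hp1 : Real.log 2 * Real.log (j * Real.log j + 0.3*j + 37) ≤ 0.6931471808 * ((1869:ℝ) * 0.6931471808 / 256) :=
      mul_le_mul hlog2u.le hrho hlogL0nn (by norm_num)
    have hp2 : ((j+10) * Real.log 2) * Real.log (j * Real.log j + 0.3*j + 37) ≤ (j+10) * (0.6931471808 * ((1869:ℝ) * 0.6931471808 / 256)) := by
      rw [mul_assoc]
      exact mul_le_mul_of_nonneg_left hp1 hj10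
    nlinarith [hp2, hju1]
  by_cases hcase7 : j ≤ 36
  · have hu1 : (1280:ℝ) * 0.6931471803 / 256 ≤ Real.log j :=
      le_trans (by simpa using log_lb (32:ℝ) 1280 256 (by norm_num) (by rw [two_pow_split]; norm_num) (by norm_num)) (Real.log_le_log (by norm_num) (by linarith : (32:ℝ) ≤ j))
    have hu2 : Real.log j ≤ (1324:ℝ) * 0.6931471808 / 256 :=
      le_trans (Real.log_le_log hj0 hcase7) (by simpa using log_ub (36:ℝ) 1324 256 (by norm_num) (by rw [two_pow_split]; norm_num) (by norm_num))
    have hY : j * Real.log j + 0.3*j + 37 ≤ (442138351813/2500000000 : ℝ) := by nlinarith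
    have hrho : Real.log (j * Real.log j + 0.3*j + 37) ≤ (1912:ℝ) * 0.6931471808 / 256 :=
      le_trans (Real.log_le_log (by linarith) hY) (by simpa using log_ub (442138351813/2500000000 : ℝ) 1912 256 (by norm_num) (by rw [two_pow_split]; norm_num) (by norm_num))
    have hju1 : j * ((1280:ℝ) * 0.6931471803 / 256) ≤ j * Real.log j :=
      mul_le_mul_of_nonneg_left hu1 (le_of_lt hj0)
    have hp1 : Real.log 2 * Real.log (j * Real.log j + 0.3*j + 37) ≤ 0.6931471808 * ((1912:ℝ) * 0.6931471808 / 256) :=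
      mul_le_mul hlog2u.le hrho hlogL0nn (by norm_num)
    have hp2 : ((j+10) * Real.log 2) * Real.log (j * Real.log j + 0.3*j + 37) ≤ (j+10) * (0.6931471808 * ((1912:ℝ) * 0.6931471808 / 256)) := by
      rw [mul_assoc]
      exact mul_le_mul_of_nonneg_left hp1 hj10
    nlinarith [hp2, hju1]
  by_cases hcase8 : j ≤ 41
  · have hu1 : (1323:ℝ) * 0.6931471803 / 256 ≤ Real.log j :=
      le_trans (by simpa using log_lb (36:ℝ) 1323 256 (by norm_num) (by rw [two_pow_split]; norm_num) (by norm_num)) (Real.log_le_log (by norm_num) (by linarith : (36:ℝ) ≤ j))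
    have hu2 : Real.log j ≤ (1372:ℝ) * 0.6931471808 / 256 :=
      le_trans (Real.log_le_log hj0 hcase8) (by simpa using log_ub (41:ℝ) 1372 256 (by norm_num) (by rw [two_pow_split]; norm_num) (by norm_num))
    have hY : j * Real.log j + 0.3*j + 37 ≤ (2016082625561/10000000000 : ℝ) := by nlinarith
    have hrho : Real.log (j * Real.log j + 0.3*j + 37) ≤ (1960:ℝ) * 0.6931471808 / 256 :=
      le_trans (Real.log_le_log (by linarith) hY) (by simpa using log_ub (2016082625561/10000000000 : ℝ) 1960 256 (by norm_num) (by rw [two_pow_split]; norm_num) (by norm_num))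
    have hju1 : j * ((1323:ℝ) * 0.6931471803 / 256) ≤ j * Real.log j :=
      mul_le_mul_of_nonneg_left hu1 (le_of_lt hj0)
    have hp1 : Real.log 2 * Real.log (j * Real.log j + 0.3*j + 37) ≤ 0.6931471808 * ((1960:ℝ) * 0.6931471808 / 256) :=
      mul_le_mul hlog2u.le hrho hlogL0nn (by norm_num)
    have hp2 : ((j+10) * Real.log 2) * Real.log (j * Real.log j + 0.3*j + 37) ≤ (j+10) * (0.6931471808 * ((1960:ℝ) * 0.6931471808 / 256)) := by
      rw [mul_assoc]
      exact mul_le_mul_of_nonneg_left hp1 hj10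
    nlinarith [hp2, hju1]
  by_cases hcase9 : j ≤ 47
  · have hu1 : (1371:ℝ) * 0.6931471803 / 256 ≤ Real.log j :=
      le_trans (by simpa using log_lb (41:ℝ) 1371 256 (by norm_num) (by rw [two_pow_split]; norm_num) (by norm_num)) (Real.log_le_log (by norm_num) (by linarith : (41:ℝ) ≤ j))
    have hu2 : Real.log j ≤ (1422:ℝ) * 0.6931471808 / 256 :=
      le_trans (Real.log_le_log hj0 hcase9) (by simpa using log_ub (47:ℝ) 1422 256 (by norm_num) (by rw [two_pow_split]; norm_num) (by norm_num))
    have hY : j * Real.log j + 0.3*j + 37 ≤ (4641203021999/20000000000 : ℝ) := by nlinarith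
    have hrho : Real.log (j * Real.log j + 0.3*j + 37) ≤ (2012:ℝ) * 0.6931471808 / 256 :=
      le_trans (Real.log_le_log (by linarith) hY) (by simpa using log_ub (4641203021999/20000000000 : ℝ) 2012 256 (by norm_num) (by rw [two_pow_split]; norm_num) (by norm_num))
    have hju1 : j * ((1371:ℝ) * 0.6931471803 / 256) ≤ j * Real.log j :=
      mul_le_mul_of_nonneg_left hu1 (le_of_lt hj0)
    have hp1 : Real.log 2 * Real.log (j * Real.log j + 0.3*j + 37) ≤ 0.6931471808 * ((2012:ℝ) * 0.6931471808 / 256) :=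
      mul_le_mul hlog2u.le hrho hlogL0nn (by norm_num)
    have hp2 : ((j+10) * Real.log 2) * Real.log (j * Real.log j + 0.3*j + 37) ≤ (j+10) * (0.6931471808 * ((2012:ℝ) * 0.6931471808 / 256)) := by
      rw [mul_assoc]
      exact mul_le_mul_of_nonneg_left hp1 hj10
    nlinarith [hp2, hju1]
  by_cases hcase10 : j ≤ 55
  · have hu1 : (1421:ℝ) * 0.6931471803 / 256 ≤ Real.log j :=
      le_trans (by simpa using log_lb (47:ℝ) 1421 256 (by norm_num) (by rw [two_pow_split]; norm_num) (by norm_num)) (Real.log_le_log (by norm_num) (by linarith : (47:ℝ) ≤ j))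
    have hu2 : Real.log j ≤ (1481:ℝ) * 0.6931471808 / 256 :=
      le_trans (Real.log_le_log hj0 hcase10) (by simpa using log_ub (55:ℝ) 1481 256 (by norm_num) (by rw [two_pow_split]; norm_num) (by norm_num))
    have hY : j * Real.log j + 0.3*j + 37 ≤ (2192384487877/8000000000 : ℝ) := by nlinarith
    have hrho : Real.log (j * Real.log j + 0.3*j + 37) ≤ (2074:ℝ) * 0.6931471808 / 256 :=
      le_trans (Real.log_le_log (by linarith) hY) (by simpa using log_ub (2192384487877/8000000000 : ℝ) 2074 256 (by norm_num) (by rw [two_pow_split]; norm_num) (by norm_num))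
    have hju1 : j * ((1421:ℝ) * 0.6931471803 / 256) ≤ j * Real.log j :=
      mul_le_mul_of_nonneg_left hu1 (le_of_lt hj0)
    have hp1 : Real.log 2 * Real.log (j * Real.log j + 0.3*j + 37) ≤ 0.6931471808 * ((2074:ℝ) * 0.6931471808 / 256) :=
      mul_le_mul hlog2u.le hrho hlogL0nn (by norm_num)
    have hp2 : ((j+10) * Real.log 2) * Real.log (j * Real.log j + 0.3*j + 37) ≤ (j+10) * (0.6931471808 * ((2074:ℝ) * 0.6931471808 / 256)) := by
      rw [mul_assoc]
      exact mul_le_mul_of_nonneg_left hp1 hj10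
    nlinarith [hp2, hju1]
  by_cases hcase11 : j ≤ 67
  · have hu1 : (1480:ℝ) * 0.6931471803 / 256 ≤ Real.log j :=
      le_trans (by simpa using log_lb (55:ℝ) 1480 256 (by norm_num) (by rw [two_pow_split]; norm_num) (by norm_num)) (Real.log_le_log (by norm_num) (by linarith : (55:ℝ) ≤ j))
    have hu2 : Real.log j ≤ (1553:ℝ) * 0.6931471808 / 256 :=
      le_trans (Real.log_le_log hj0 hcase11) (by simpa using log_ub (67:ℝ) 1553 256 (by norm_num) (by rw [two_pow_split]; norm_num) (by norm_num))
    have hY : j * Real.log j + 0.3*j + 37 ≤ (13553165204597/40000000000 : ℝ) := by nlinarith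
    have hrho : Real.log (j * Real.log j + 0.3*j + 37) ≤ (2152:ℝ) * 0.6931471808 / 256 :=
      le_trans (Real.log_le_log (by linarith) hY) (by simpa using log_ub (13553165204597/40000000000 : ℝ) 2152 256 (by norm_num) (by rw [two_pow_split]; norm_num) (by norm_num))
    have hju1 : j * ((1480:ℝ) * 0.6931471803 / 256) ≤ j * Real.log j :=
      mul_le_mul_of_nonneg_left hu1 (le_of_lt hj0)
    have hp1 : Real.log 2 * Real.log (j * Real.log j + 0.3*j + 37) ≤ 0.6931471808 * ((2152:ℝ) * 0.6931471808 / 256) :=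
      mul_le_mul hlog2u.le hrho hlogL0nn (by norm_num)
    have hp2 : ((j+10) * Real.log 2) * Real.log (j * Real.log j + 0.3*j + 37) ≤ (j+10) * (0.6931471808 * ((2152:ℝ) * 0.6931471808 / 256)) := by
      rw [mul_assoc]
      exact mul_le_mul_of_nonneg_left hp1 hj10
    nlinarith [hp2, hju1]
  by_cases hcase12 : j ≤ 84
  · have hu1 : (1552:ℝ) * 0.6931471803 / 256 ≤ Real.log j :=
      le_trans (by simpa using log_lb (67:ℝ) 1552 256 (by norm_num) (by rw [two_pow_split]; norm_num) (by norm_num)) (Real.log_le_log (by norm_num) (by linarith : (67:ℝ) ≤ j))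
    have hu2 : Real.log j ≤ (1637:ℝ) * 0.6931471808 / 256 :=
      le_trans (Real.log_le_log hj0 hcase12) (by simpa using log_ub (84:ℝ) 1637 256 (by norm_num) (by rw [two_pow_split]; norm_num) (by norm_num))
    have hY : j * Real.log j + 0.3*j + 37 ≤ (4345175099119/10000000000 : ℝ) := by nlinarith
    have hrho : Real.log (j * Real.log j + 0.3*j + 37) ≤ (2244:ℝ) * 0.6931471808 / 256 :=
      le_trans (Real.log_le_log (by linarith) hY) (by simpa using log_ub (4345175099119/10000000000 : ℝ) 2244 256 (by norm_num) (by rw [two_pow_split]; norm_num) (by norm_num))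
    have hju1 : j * ((1552:ℝ) * 0.6931471803 / 256) ≤ j * Real.log j :=
      mul_le_mul_of_nonneg_left hu1 (le_of_lt hj0)
    have hp1 : Real.log 2 * Real.log (j * Real.log j + 0.3*j + 37) ≤ 0.6931471808 * ((2244:ℝ) * 0.6931471808 / 256) :=
      mul_le_mul hlog2u.le hrho hlogL0nn (by norm_num)
    have hp2 : ((j+10) * Real.log 2) * Real.log (j * Real.log j + 0.3*j + 37) ≤ (j+10) * (0.6931471808 * ((2244:ℝ) * 0.6931471808 / 256)) := by
      rw [mul_assoc]
      exact mul_le_mul_of_nonneg_left hp1 hj10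
    nlinarith [hp2, hju1]
  by_cases hcase13 : j ≤ 111
  · have hu1 : (1636:ℝ) * 0.6931471803 / 256 ≤ Real.log j :=
      le_trans (by simpa using log_lb (84:ℝ) 1636 256 (by norm_num) (by rw [two_pow_split]; norm_num) (by norm_num)) (Real.log_le_log (by norm_num) (by linarith : (84:ℝ) ≤ j))
    have hu2 : Real.log j ≤ (1740:ℝ) * 0.6931471808 / 256 :=
      le_trans (Real.log_le_log hj0 hcase13) (by simpa using log_ub (111:ℝ) 1740 256 (by norm_num) (by rw [two_pow_split]; norm_num) (by norm_num))
    have hY : j * Real.log j + 0.3*j + 37 ≤ (1186494113279/2000000000 : ℝ) := by nlinarith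
    have hrho : Real.log (j * Real.log j + 0.3*j + 37) ≤ (2359:ℝ) * 0.6931471808 / 256 :=
      le_trans (Real.log_le_log (by linarith) hY) (by simpa using log_ub (1186494113279/2000000000 : ℝ) 2359 256 (by norm_num) (by rw [two_pow_split]; norm_num) (by norm_num))
    have hju1 : j * ((1636:ℝ) * 0.6931471803 / 256) ≤ j * Real.log j :=
      mul_le_mul_of_nonneg_left hu1 (le_of_lt hj0)
    have hp1 : Real.log 2 * Real.log (j * Real.log j + 0.3*j + 37) ≤ 0.6931471808 * ((2359:ℝ) * 0.6931471808 / 256) :=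
      mul_le_mul hlog2u.le hrho hlogL0nn (by norm_num)
    have hp2 : ((j+10) * Real.log 2) * Real.log (j * Real.log j + 0.3*j + 37) ≤ (j+10) * (0.6931471808 * ((2359:ℝ) * 0.6931471808 / 256)) := by
      rw [mul_assoc]
      exact mul_le_mul_of_nonneg_left hp1 hj10
    nlinarith [hp2, hju1]
  by_cases hcase14 : j ≤ 157
  · have hu1 : (1739:ℝ) * 0.6931471803 / 256 ≤ Real.log j :=
      le_trans (by simpa using log_lb (111:ℝ) 1739 256 (by norm_num) (by rw [two_pow_split]; norm_num) (by norm_num)) (Real.log_le_log (by norm_num) (by linarith : (111:ℝ) ≤ j))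
    have hu2 : Real.log j ≤ (1868:ℝ) * 0.6931471808 / 256 :=
      le_trans (Real.log_le_log hj0 hcase14) (by simpa using log_ub (157:ℝ) 1868 256 (by norm_num) (by rw [two_pow_split]; norm_num) (by norm_num))
    have hY : j * Real.log j + 0.3*j + 37 ≤ (8781759085793/10000000000 : ℝ) := by nlinarith
    have hrho : Real.log (j * Real.log j + 0.3*j + 37) ≤ (2504:ℝ) * 0.6931471808 / 256 :=
      le_trans (Real.log_le_log (by linarith) hY) (by simpa using log_ub (8781759085793/10000000000 : ℝ) 2504 256 (by norm_num) (by rw [two_pow_split]; norm_num) (by norm_num))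
    have hju1 : j * ((1739:ℝ) * 0.6931471803 / 256) ≤ j * Real.log j :=
      mul_le_mul_of_nonneg_left hu1 (le_of_lt hj0)
    have hp1 : Real.log 2 * Real.log (j * Real.log j + 0.3*j + 37) ≤ 0.6931471808 * ((2504:ℝ) * 0.6931471808 / 256) :=
      mul_le_mul hlog2u.le hrho hlogL0nn (by norm_num)
    have hp2 : ((j+10) * Real.log 2) * Real.log (j * Real.log j + 0.3*j + 37) ≤ (j+10) * (0.6931471808 * ((2504:ℝ) * 0.6931471808 / 256)) := by
      rw [mul_assoc]
      exact mul_le_mul_of_nonneg_left hp1 hj10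
    nlinarith [hp2, hju1]
  by_cases hcase15 : j ≤ 242
  · have hu1 : (1867:ℝ) * 0.6931471803 / 256 ≤ Real.log j :=
      le_trans (by simpa using log_lb (157:ℝ) 1867 256 (by norm_num) (by rw [two_pow_split]; norm_num) (by norm_num)) (Real.log_le_log (by norm_num) (by linarith : (157:ℝ) ≤ j))
    have hu2 : Real.log j ≤ (2028:ℝ) * 0.6931471808 / 256 :=
      le_trans (Real.log_le_log hj0 hcase15) (by simpa using log_ub (242:ℝ) 2028 256 (by norm_num) (by rw [two_pow_split]; norm_num) (by norm_num))
    have hY : j * Real.log j + 0.3*j + 37 ≤ (7192140640709/5000000000 : ℝ) := by nlinarith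
    have hrho : Real.log (j * Real.log j + 0.3*j + 37) ≤ (2686:ℝ) * 0.6931471808 / 256 :=
      le_trans (Real.log_le_log (by linarith) hY) (by simpa using log_ub (7192140640709/5000000000 : ℝ) 2686 256 (by norm_num) (by rw [two_pow_split]; norm_num) (by norm_num))
    have hju1 : j * ((1867:ℝ) * 0.6931471803 / 256) ≤ j * Real.log j :=
      mul_le_mul_of_nonneg_left hu1 (le_of_lt hj0)
    have hp1 : Real.log 2 * Real.log (j * Real.log j + 0.3*j + 37) ≤ 0.6931471808 * ((2686:ℝ) * 0.6931471808 / 256) :=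
      mul_le_mul hlog2u.le hrho hlogL0nn (by norm_num)
    have hp2 : ((j+10) * Real.log 2) * Real.log (j * Real.log j + 0.3*j + 37) ≤ (j+10) * (0.6931471808 * ((2686:ℝ) * 0.6931471808 / 256)) := by
      rw [mul_assoc]
      exact mul_le_mul_of_nonneg_left hp1 hj10
    nlinarith [hp2, hju1]
  by_cases hcase16 : j ≤ 418
  · have hu1 : (2027:ℝ) * 0.6931471803 / 256 ≤ Real.log j :=
      le_trans (by simpa using log_lb (242:ℝ) 2027 256 (by norm_num) (by rw [two_pow_split]; norm_num) (by norm_num)) (Real.log_le_log (by norm_num) (by linarith : (242:ℝ) ≤ j))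
    have hu2 : Real.log j ≤ (2230:ℝ) * 0.6931471808 / 256 :=
      le_trans (Real.log_le_log hj0 hcase16) (by simpa using log_ub (418:ℝ) 2230 256 (by norm_num) (by rw [two_pow_split]; norm_num) (by norm_num))
    have hY : j * Real.log j + 0.3*j + 37 ≤ (5372536039929/2000000000 : ℝ) := by nlinarith
    have hrho : Real.log (j * Real.log j + 0.3*j + 37) ≤ (2917:ℝ) * 0.6931471808 / 256 :=
      le_trans (Real.log_le_log (by linarith) hY) (by simpa using log_ub (5372536039929/2000000000 : ℝ) 2917 256 (by norm_num) (by rw [two_pow_split]; norm_num) (by norm_num))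
    have hju1 : j * ((2027:ℝ) * 0.6931471803 / 256) ≤ j * Real.log j :=
      mul_le_mul_of_nonneg_left hu1 (le_of_lt hj0)
    have hp1 : Real.log 2 * Real.log (j * Real.log j + 0.3*j + 37) ≤ 0.6931471808 * ((2917:ℝ) * 0.6931471808 / 256) :=
      mul_le_mul hlog2u.le hrho hlogL0nn (by norm_num)
    have hp2 : ((j+10) * Real.log 2) * Real.log (j * Real.log j + 0.3*j + 37) ≤ (j+10) * (0.6931471808 * ((2917:ℝ) * 0.6931471808 / 256)) := by
      rw [mul_assoc]
      exact mul_le_mul_of_nonneg_left hp1 hj10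
    nlinarith [hp2, hju1]
  by_cases hcase17 : j ≤ 512
  · have hu1 : (2229:ℝ) * 0.6931471803 / 256 ≤ Real.log j :=
      le_trans (by simpa using log_lb (418:ℝ) 2229 256 (by norm_num) (by rw [two_pow_split]; norm_num) (by norm_num)) (Real.log_le_log (by norm_num) (by linarith : (418:ℝ) ≤ j))
    have hu2 : Real.log j ≤ (2304:ℝ) * 0.6931471808 / 256 :=
      le_trans (Real.log_le_log hj0 hcase17) (by simpa using log_ub (512:ℝ) 2304 256 (by norm_num) (by rw [two_pow_split]; norm_num) (by norm_num))
    have hY : j * Real.log j + 0.3*j + 37 ≤ (33052951261/9765625 : ℝ) := by nlinarith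
    have hrho : Real.log (j * Real.log j + 0.3*j + 37) ≤ (3002:ℝ) * 0.6931471808 / 256 :=
      le_trans (Real.log_le_log (by linarith) hY) (by simpa using log_ub (33052951261/9765625 : ℝ) 3002 256 (by norm_num) (by rw [two_pow_split]; norm_num) (by norm_num))
    have hju1 : j * ((2229:ℝ) * 0.6931471803 / 256) ≤ j * Real.log j :=
      mul_le_mul_of_nonneg_left hu1 (le_of_lt hj0)
    have hp1 : Real.log 2 * Real.log (j * Real.log j + 0.3*j + 37) ≤ 0.6931471808 * ((3002:ℝ) * 0.6931471808 / 256) :=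
      mul_le_mul hlog2u.le hrho hlogL0nn (by norm_num)
    have hp2 : ((j+10) * Real.log 2) * Real.log (j * Real.log j + 0.3*j + 37) ≤ (j+10) * (0.6931471808 * ((3002:ℝ) * 0.6931471808 / 256)) := by
      rw [mul_assoc]
      exact mul_le_mul_of_nonneg_left hp1 hj10
    nlinarith [hp2, hju1]
  -- asymptotic branch j > 512
  have hj512 : (512:ℝ) ≤ j := by linarith [not_le.mp hcase17]
  have hvmin : (2304:ℝ) * 0.6931471803 / 256 ≤ Real.log j :=
    le_trans (by simpa using log_lb (512:ℝ) 2304 256 (by norm_num) (by rw [two_pow_split]; norm_num) (by norm_num)) (Real.log_le_log (by norm_num) hj512)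
  set v := Real.log j with hv
  have hsplit : Real.log (j * Real.log j + 0.3*j + 37) = v + Real.log (v + 0.3 + 37/j) := by
    have h1 : j * Real.log j + 0.3*j + 37 = j * (v + 0.3 + 37/j) := by field_simp; ring
    rw [h1, Real.log_mul (ne_of_gt hj0) (by positivity)]
  have h8 : Real.log (v + 0.3 + 37/j) ≤ Real.log (v + 0.4) := by
    apply Real.log_le_log (by positivity)
    have h37 : 37/j ≤ 0.1 := by rw [div_le_iff₀ hj0]; linarith
    linarith
  have h9 : Real.log (v + 0.4) ≤ (v+0.4)/8 - 1 + 3 * 0.6931471808 := by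
    have hd : Real.log ((v+0.4)/8) ≤ (v+0.4)/8 - 1 := Real.log_le_sub_one_of_pos (by positivity)
    have he : Real.log ((v+0.4)/8) = Real.log (v+0.4) - Real.log 8 := Real.log_div (by positivity) (by norm_num)
    have h8' : Real.log 8 ≤ 3 * 0.6931471808 := by
      rw [show (8:ℝ) = 2^3 by norm_num, Real.log_pow]; push_cast; nlinarith
    linarith
  have hrho : Real.log (j * Real.log j + 0.3*j + 37) ≤ 9/8 * v + 1.1294415424 := by
    rw [hsplit]; linarith
  have hrnn : (0:ℝ) ≤ 9/8 * v + 1.1294415424 := by linarith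
  have hp1 : Real.log 2 * Real.log (j * Real.log j + 0.3*j + 37) ≤ 0.6931471808 * (9/8 * v + 1.1294415424) :=
    mul_le_mul hlog2u.le hrho hlogL0nn (by norm_num)
  have hp2 : ((j+10) * Real.log 2) * Real.log (j * Real.log j + 0.3*j + 37) ≤ (j+10) * (0.6931471808 * (9/8 * v + 1.1294415424)) := by
    rw [mul_assoc]
    exact mul_le_mul_of_nonneg_left hp1 hj10
  have hprod : (0:ℝ) ≤ (j - 512) * (v - 2304 * 0.6931471803 / 256) :=
    mul_nonneg (by linarith) (by linarith)
  nlinarith [hp2, hprod]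

lemma caseK4 {L : ℝ} (hL : (3949:ℝ) * 0.6931471803 / 512 ≤ L) :
    4 * Real.log 2 * Real.log L < 0.96 * L := by
  have hlog2u := Real.log_two_lt_d9
  have hlog2nn : (0:ℝ) ≤ Real.log 2 := (Real.log_pos (by norm_num)).le
  set L0 : ℝ := 3949 * 0.6931471803 / 512 with hL0def
  have h1 : (1:ℝ) ≤ L0 := by norm_num
  have hrho : Real.log L0 ≤ (4954:ℝ) * 0.6931471808 / 2048 := by
    have h := log_ub L0 4954 2048 (by norm_num) (by rw [hL0def, pow_split (2:ℝ) _ 64, pow_split _ 2048 16]; norm_num) (by norm_num)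
    simpa using h
  have hlognn : 0 ≤ Real.log L0 := Real.log_nonneg h1
  have h3 : 4 * Real.log 2 * Real.log L0 < 0.96 * L0 := by nlinarith
  exact mono_transfer h1 hL (by positivity) (by nlinarith) h3

lemma caseK5 {L : ℝ} (hL : (5720:ℝ) * 0.6931471803 / 512 ≤ L) :
    5 * Real.log 2 * Real.log L < 0.96 * L := by
  have hlog2u := Real.log_two_lt_d9
  have hlog2nn : (0:ℝ) ≤ Real.log 2 := (Real.log_pos (by norm_num)).le
  set L0 : ℝ := 5720 * 0.6931471803 / 512 with hL0def
  have h1 : (1:ℝ) ≤ L0 := by norm_num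
  have hrho : Real.log L0 ≤ (6048:ℝ) * 0.6931471808 / 2048 := by
    have h := log_ub L0 6048 2048 (by norm_num) (by rw [hL0def, pow_split (2:ℝ) _ 64, pow_split _ 2048 16]; norm_num) (by norm_num)
    simpa using h
  have hlognn : 0 ≤ Real.log L0 := Real.log_nonneg h1
  have h3 : 5 * Real.log 2 * Real.log L0 < 0.96 * L0 := by nlinarith
  exact mono_transfer h1 hL (by positivity) (by nlinarith) h3

lemma caseK6 {L : ℝ} (hL : (7615:ℝ) * 0.6931471803 / 512 ≤ L) :
    6 * Real.log 2 * Real.log L < 0.96 * L := by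
  have hlog2u := Real.log_two_lt_d9
  have hlog2nn : (0:ℝ) ≤ Real.log 2 := (Real.log_pos (by norm_num)).le
  set L0 : ℝ := 7615 * 0.6931471803 / 512 with hL0def
  have h1 : (1:ℝ) ≤ L0 := by norm_num
  have hrho : Real.log L0 ≤ (6894:ℝ) * 0.6931471808 / 2048 := by
    have h := log_ub L0 6894 2048 (by norm_num) (by rw [hL0def, pow_split (2:ℝ) _ 64, pow_split _ 2048 16]; norm_num) (by norm_num)
    simpa using h
  have hlognn : 0 ≤ Real.log L0 := Real.log_nonneg h1
  have h3 : 6 * Real.log 2 * Real.log L0 < 0.96 * L0 := by nlinarith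
  exact mono_transfer h1 hL (by positivity) (by nlinarith) h3

lemma caseK7 {L : ℝ} (hL : (9708:ℝ) * 0.6931471803 / 512 ≤ L) :
    7 * Real.log 2 * Real.log L < 0.96 * L := by
  have hlog2u := Real.log_two_lt_d9
  have hlog2nn : (0:ℝ) ≤ Real.log 2 := (Real.log_pos (by norm_num)).le
  set L0 : ℝ := 9708 * 0.6931471803 / 512 with hL0def
  have h1 : (1:ℝ) ≤ L0 := by norm_num
  have hrho : Real.log L0 ≤ (7611:ℝ) * 0.6931471808 / 2048 := by
    have h := log_ub L0 7611 2048 (by norm_num) (by rw [hL0def, pow_split (2:ℝ) _ 64, pow_split _ 2048 16]; norm_num) (by norm_num)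
    simpa using h
  have hlognn : 0 ≤ Real.log L0 := Real.log_nonneg h1
  have h3 : 7 * Real.log 2 * Real.log L0 < 0.96 * L0 := by nlinarith
  exact mono_transfer h1 hL (by positivity) (by nlinarith) h3

lemma caseK8 {L : ℝ} (hL : (11883:ℝ) * 0.6931471803 / 512 ≤ L) :
    8 * Real.log 2 * Real.log L < 0.96 * L := by
  have hlog2u := Real.log_two_lt_d9
  have hlog2nn : (0:ℝ) ≤ Real.log 2 := (Real.log_pos (by norm_num)).le
  set L0 : ℝ := 11883 * 0.6931471803 / 512 with hL0def
  have h1 : (1:ℝ) ≤ L0 := by norm_num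
  have hrho : Real.log L0 ≤ (8209:ℝ) * 0.6931471808 / 2048 := by
    have h := log_ub L0 8209 2048 (by norm_num) (by rw [hL0def, pow_split (2:ℝ) _ 64, pow_split _ 2048 16]; norm_num) (by norm_num)
    simpa using h
  have hlognn : 0 ≤ Real.log L0 := Real.log_nonneg h1
  have h3 : 8 * Real.log 2 * Real.log L0 < 0.96 * L0 := by nlinarith
  exact mono_transfer h1 hL (by positivity) (by nlinarith) h3

lemma caseK9 {L : ℝ} (hL : (14199:ℝ) * 0.6931471803 / 512 ≤ L) :
    9 * Real.log 2 * Real.log L < 0.96 * L := by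
  have hlog2u := Real.log_two_lt_d9
  have hlog2nn : (0:ℝ) ≤ Real.log 2 := (Real.log_pos (by norm_num)).le
  set L0 : ℝ := 14199 * 0.6931471803 / 512 with hL0def
  have h1 : (1:ℝ) ≤ L0 := by norm_num
  have hrho : Real.log L0 ≤ (8735:ℝ) * 0.6931471808 / 2048 := by
    have h := log_ub L0 8735 2048 (by norm_num) (by rw [hL0def, pow_split (2:ℝ) _ 64, pow_split _ 2048 16]; norm_num) (by norm_num)
    simpa using h
  have hlognn : 0 ≤ Real.log L0 := Real.log_nonneg h1
  have h3 : 9 * Real.log 2 * Real.log L0 < 0.96 * L0 := by nlinarith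
  exact mono_transfer h1 hL (by positivity) (by nlinarith) h3

lemma caseK10 {L : ℝ} (hL : (16686:ℝ) * 0.6931471803 / 512 ≤ L) :
    10 * Real.log 2 * Real.log L < 0.96 * L := by
  have hlog2u := Real.log_two_lt_d9
  have hlog2nn : (0:ℝ) ≤ Real.log 2 := (Real.log_pos (by norm_num)).le
  set L0 : ℝ := 16686 * 0.6931471803 / 512 with hL0def
  have h1 : (1:ℝ) ≤ L0 := by norm_num
  have hrho : Real.log L0 ≤ (9212:ℝ) * 0.6931471808 / 2048 := by
    have h := log_ub L0 9212 2048 (by norm_num) (by rw [hL0def, pow_split (2:ℝ) _ 64, pow_split _ 2048 16]; norm_num) (by norm_num)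
    simpa using h
  have hlognn : 0 ≤ Real.log L0 := Real.log_nonneg h1
  have h3 : 10 * Real.log 2 * Real.log L0 < 0.96 * L0 := by nlinarith
  exact mono_transfer h1 hL (by positivity) (by nlinarith) h3

lemma caseK11 {L : ℝ} (hL : (19223:ℝ) * 0.6931471803 / 512 ≤ L) :
    11 * Real.log 2 * Real.log L < 0.96 * L := by
  have hlog2u := Real.log_two_lt_d9
  have hlog2nn : (0:ℝ) ≤ Real.log 2 := (Real.log_pos (by norm_num)).le
  set L0 : ℝ := 19223 * 0.6931471803 / 512 with hL0def
  have h1 : (1:ℝ) ≤ L0 := by norm_num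
  have hrho : Real.log L0 ≤ (9630:ℝ) * 0.6931471808 / 2048 := by
    have h := log_ub L0 9630 2048 (by norm_num) (by rw [hL0def, pow_split (2:ℝ) _ 64, pow_split _ 2048 16]; norm_num) (by norm_num)
    simpa using h
  have hlognn : 0 ≤ Real.log L0 := Real.log_nonneg h1
  have h3 : 11 * Real.log 2 * Real.log L0 < 0.96 * L0 := by nlinarith
  exact mono_transfer h1 hL (by positivity) (by nlinarith) h3

lemma caseK12 {L : ℝ} (hL : (21890:ℝ) * 0.6931471803 / 512 ≤ L) :
    12 * Real.log 2 * Real.log L < 0.96 * L := by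
  have hlog2u := Real.log_two_lt_d9
  have hlog2nn : (0:ℝ) ≤ Real.log 2 := (Real.log_pos (by norm_num)).le
  set L0 : ℝ := 21890 * 0.6931471803 / 512 with hL0def
  have h1 : (1:ℝ) ≤ L0 := by norm_num
  have hrho : Real.log L0 ≤ (10014:ℝ) * 0.6931471808 / 2048 := by
    have h := log_ub L0 10014 2048 (by norm_num) (by rw [hL0def, pow_split (2:ℝ) _ 64, pow_split _ 2048 16]; norm_num) (by norm_num)
    simpa using h
  have hlognn : 0 ≤ Real.log L0 := Real.log_nonneg h1
  have h3 : 12 * Real.log 2 * Real.log L0 < 0.96 * L0 := by nlinarith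
  exact mono_transfer h1 hL (by positivity) (by nlinarith) h3

lemma caseK13 {L : ℝ} (hL : (24633:ℝ) * 0.6931471803 / 512 ≤ L) :
    13 * Real.log 2 * Real.log L < 0.96 * L := by
  have hlog2u := Real.log_two_lt_d9
  have hlog2nn : (0:ℝ) ≤ Real.log 2 := (Real.log_pos (by norm_num)).le
  set L0 : ℝ := 24633 * 0.6931471803 / 512 with hL0def
  have h1 : (1:ℝ) ≤ L0 := by norm_num
  have hrho : Real.log L0 ≤ (10362:ℝ) * 0.6931471808 / 2048 := by
    have h := log_ub L0 10362 2048 (by norm_num) (by rw [hL0def, pow_split (2:ℝ) _ 64, pow_split _ 2048 16]; norm_num) (by norm_num)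
    simpa using h
  have hlognn : 0 ≤ Real.log L0 := Real.log_nonneg h1
  have h3 : 13 * Real.log 2 * Real.log L0 < 0.96 * L0 := by nlinarith
  exact mono_transfer h1 hL (by positivity) (by nlinarith) h3

lemma caseK14 {L : ℝ} (hL : (27411:ℝ) * 0.6931471803 / 512 ≤ L) :
    14 * Real.log 2 * Real.log L < 0.96 * L := by
  have hlog2u := Real.log_two_lt_d9
  have hlog2nn : (0:ℝ) ≤ Real.log 2 := (Real.log_pos (by norm_num)).le
  set L0 : ℝ := 27411 * 0.6931471803 / 512 with hL0def
  have h1 : (1:ℝ) ≤ L0 := by norm_num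
  have hrho : Real.log L0 ≤ (10678:ℝ) * 0.6931471808 / 2048 := by
    have h := log_ub L0 10678 2048 (by norm_num) (by rw [hL0def, pow_split (2:ℝ) _ 64, pow_split _ 2048 16]; norm_num) (by norm_num)
    simpa using h
  have hlognn : 0 ≤ Real.log L0 := Real.log_nonneg h1
  have h3 : 14 * Real.log 2 * Real.log L0 < 0.96 * L0 := by nlinarith
  exact mono_transfer h1 hL (by positivity) (by nlinarith) h3

lemma caseK15 {L : ℝ} (hL : (30255:ℝ) * 0.6931471803 / 512 ≤ L) :
    15 * Real.log 2 * Real.log L < 0.96 * L := by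
  have hlog2u := Real.log_two_lt_d9
  have hlog2nn : (0:ℝ) ≤ Real.log 2 := (Real.log_pos (by norm_num)).le
  set L0 : ℝ := 30255 * 0.6931471803 / 512 with hL0def
  have h1 : (1:ℝ) ≤ L0 := by norm_num
  have hrho : Real.log L0 ≤ (10970:ℝ) * 0.6931471808 / 2048 := by
    have h := log_ub L0 10970 2048 (by norm_num) (by rw [hL0def, pow_split (2:ℝ) _ 64, pow_split _ 2048 16]; norm_num) (by norm_num)
    simpa using h
  have hlognn : 0 ≤ Real.log L0 := Real.log_nonneg h1
  have h3 : 15 * Real.log 2 * Real.log L0 < 0.96 * L0 := by nlinarith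
  exact mono_transfer h1 hL (by positivity) (by nlinarith) h3

lemma caseK16 {L : ℝ} (hL : (33188:ℝ) * 0.6931471803 / 512 ≤ L) :
    16 * Real.log 2 * Real.log L < 0.96 * L := by
  have hlog2u := Real.log_two_lt_d9
  have hlog2nn : (0:ℝ) ≤ Real.log 2 := (Real.log_pos (by norm_num)).le
  set L0 : ℝ := 33188 * 0.6931471803 / 512 with hL0def
  have h1 : (1:ℝ) ≤ L0 := by norm_num
  have hrho : Real.log L0 ≤ (11243:ℝ) * 0.6931471808 / 2048 := by
    have h := log_ub L0 11243 2048 (by norm_num) (by rw [hL0def, pow_split (2:ℝ) _ 64, pow_split _ 2048 16]; norm_num) (by norm_num)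
    simpa using h
  have hlognn : 0 ≤ Real.log L0 := Real.log_nonneg h1
  have h3 : 16 * Real.log 2 * Real.log L0 < 0.96 * L0 := by nlinarith
  exact mono_transfer h1 hL (by positivity) (by nlinarith) h3

lemma caseK17 {L : ℝ} (hL : (36200:ℝ) * 0.6931471803 / 512 ≤ L) :
    17 * Real.log 2 * Real.log L < 0.96 * L := by
  have hlog2u := Real.log_two_lt_d9
  have hlog2nn : (0:ℝ) ≤ Real.log 2 := (Real.log_pos (by norm_num)).le
  set L0 : ℝ := 36200 * 0.6931471803 / 512 with hL0def
  have h1 : (1:ℝ) ≤ L0 := by norm_num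
  have hrho : Real.log L0 ≤ (11500:ℝ) * 0.6931471808 / 2048 := by
    have h := log_ub L0 11500 2048 (by norm_num) (by rw [hL0def, pow_split (2:ℝ) _ 64, pow_split _ 2048 16]; norm_num) (by norm_num)
    simpa using h
  have hlognn : 0 ≤ Real.log L0 := Real.log_nonneg h1
  have h3 : 17 * Real.log 2 * Real.log L0 < 0.96 * L0 := by nlinarith
  exact mono_transfer h1 hL (by positivity) (by nlinarith) h3

lemma caseK18 {L : ℝ} (hL : (39236:ℝ) * 0.6931471803 / 512 ≤ L) :
    18 * Real.log 2 * Real.log L < 0.96 * L := by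
  have hlog2u := Real.log_two_lt_d9
  have hlog2nn : (0:ℝ) ≤ Real.log 2 := (Real.log_pos (by norm_num)).le
  set L0 : ℝ := 39236 * 0.6931471803 / 512 with hL0def
  have h1 : (1:ℝ) ≤ L0 := by norm_num
  have hrho : Real.log L0 ≤ (11738:ℝ) * 0.6931471808 / 2048 := by
    have h := log_ub L0 11738 2048 (by norm_num) (by rw [hL0def, pow_split (2:ℝ) _ 64, pow_split _ 2048 16]; norm_num) (by norm_num)
    simpa using h
  have hlognn : 0 ≤ Real.log L0 := Real.log_nonneg h1
  have h3 : 18 * Real.log 2 * Real.log L0 < 0.96 * L0 := by nlinarith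
  exact mono_transfer h1 hL (by positivity) (by nlinarith) h3

lemma caseK19 {L : ℝ} (hL : (42342:ℝ) * 0.6931471803 / 512 ≤ L) :
    19 * Real.log 2 * Real.log L < 0.96 * L := by
  have hlog2u := Real.log_two_lt_d9
  have hlog2nn : (0:ℝ) ≤ Real.log 2 := (Real.log_pos (by norm_num)).le
  set L0 : ℝ := 42342 * 0.6931471803 / 512 with hL0def
  have h1 : (1:ℝ) ≤ L0 := by norm_num
  have hrho : Real.log L0 ≤ (11963:ℝ) * 0.6931471808 / 2048 := by
    have h := log_ub L0 11963 2048 (by norm_num) (by rw [hL0def, pow_split (2:ℝ) _ 64, pow_split _ 2048 16]; norm_num) (by norm_num)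
    simpa using h
  have hlognn : 0 ≤ Real.log L0 := Real.log_nonneg h1
  have h3 : 19 * Real.log 2 * Real.log L0 < 0.96 * L0 := by nlinarith
  exact mono_transfer h1 hL (by positivity) (by nlinarith) h3

lemma caseK20 {L : ℝ} (hL : (45491:ℝ) * 0.6931471803 / 512 ≤ L) :
    20 * Real.log 2 * Real.log L < 0.96 * L := by
  have hlog2u := Real.log_two_lt_d9
  have hlog2nn : (0:ℝ) ≤ Real.log 2 := (Real.log_pos (by norm_num)).le
  set L0 : ℝ := 45491 * 0.6931471803 / 512 with hL0def
  have h1 : (1:ℝ) ≤ L0 := by norm_num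
  have hrho : Real.log L0 ≤ (12175:ℝ) * 0.6931471808 / 2048 := by
    have h := log_ub L0 12175 2048 (by norm_num) (by rw [hL0def, pow_split (2:ℝ) _ 64, pow_split _ 2048 16]; norm_num) (by norm_num)
    simpa using h
  have hlognn : 0 ≤ Real.log L0 := Real.log_nonneg h1
  have h3 : 20 * Real.log 2 * Real.log L0 < 0.96 * L0 := by nlinarith
  exact mono_transfer h1 hL (by positivity) (by nlinarith) h3

lemma caseK21 {L : ℝ} (hL : (48660:ℝ) * 0.6931471803 / 512 ≤ L) :
    21 * Real.log 2 * Real.log L < 0.96 * L := by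
  have hlog2u := Real.log_two_lt_d9
  have hlog2nn : (0:ℝ) ≤ Real.log 2 := (Real.log_pos (by norm_num)).le
  set L0 : ℝ := 48660 * 0.6931471803 / 512 with hL0def
  have h1 : (1:ℝ) ≤ L0 := by norm_num
  have hrho : Real.log L0 ≤ (12374:ℝ) * 0.6931471808 / 2048 := by
    have h := log_ub L0 12374 2048 (by norm_num) (by rw [hL0def, pow_split (2:ℝ) _ 64, pow_split _ 2048 16]; norm_num) (by norm_num)
    simpa using h
  have hlognn : 0 ≤ Real.log L0 := Real.log_nonneg h1
  have h3 : 21 * Real.log 2 * Real.log L0 < 0.96 * L0 := by nlinarith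
  exact mono_transfer h1 hL (by positivity) (by nlinarith) h3

lemma caseK22 {L : ℝ} (hL : (51888:ℝ) * 0.6931471803 / 512 ≤ L) :
    22 * Real.log 2 * Real.log L < 0.96 * L := by
  have hlog2u := Real.log_two_lt_d9
  have hlog2nn : (0:ℝ) ≤ Real.log 2 := (Real.log_pos (by norm_num)).le
  set L0 : ℝ := 51888 * 0.6931471803 / 512 with hL0def
  have h1 : (1:ℝ) ≤ L0 := by norm_num
  have hrho : Real.log L0 ≤ (12564:ℝ) * 0.6931471808 / 2048 := by
    have h := log_ub L0 12564 2048 (by norm_num) (by rw [hL0def, pow_split (2:ℝ) _ 64, pow_split _ 2048 16]; norm_num) (by norm_num)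
    simpa using h
  have hlognn : 0 ≤ Real.log L0 := Real.log_nonneg h1
  have h3 : 22 * Real.log 2 * Real.log L0 < 0.96 * L0 := by nlinarith
  exact mono_transfer h1 hL (by positivity) (by nlinarith) h3

lemma caseK23 {L : ℝ} (hL : (55152:ℝ) * 0.6931471803 / 512 ≤ L) :
    23 * Real.log 2 * Real.log L < 0.96 * L := by
  have hlog2u := Real.log_two_lt_d9
  have hlog2nn : (0:ℝ) ≤ Real.log 2 := (Real.log_pos (by norm_num)).le
  set L0 : ℝ := 55152 * 0.6931471803 / 512 with hL0def
  have h1 : (1:ℝ) ≤ L0 := by norm_num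
  have hrho : Real.log L0 ≤ (12744:ℝ) * 0.6931471808 / 2048 := by
    have h := log_ub L0 12744 2048 (by norm_num) (by rw [hL0def, pow_split (2:ℝ) _ 64, pow_split _ 2048 16]; norm_num) (by norm_num)
    simpa using h
  have hlognn : 0 ≤ Real.log L0 := Real.log_nonneg h1
  have h3 : 23 * Real.log 2 * Real.log L0 < 0.96 * L0 := by nlinarith
  exact mono_transfer h1 hL (by positivity) (by nlinarith) h3

lemma caseK24 {L : ℝ} (hL : (58467:ℝ) * 0.6931471803 / 512 ≤ L) :
    24 * Real.log 2 * Real.log L < 0.96 * L := by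
  have hlog2u := Real.log_two_lt_d9
  have hlog2nn : (0:ℝ) ≤ Real.log 2 := (Real.log_pos (by norm_num)).le
  set L0 : ℝ := 58467 * 0.6931471803 / 512 with hL0def
  have h1 : (1:ℝ) ≤ L0 := by norm_num
  have hrho : Real.log L0 ≤ (12916:ℝ) * 0.6931471808 / 2048 := by
    have h := log_ub L0 12916 2048 (by norm_num) (by rw [hL0def, pow_split (2:ℝ) _ 64, pow_split _ 2048 16]; norm_num) (by norm_num)
    simpa using h
  have hlognn : 0 ≤ Real.log L0 := Real.log_nonneg h1
  have h3 : 24 * Real.log 2 * Real.log L0 < 0.96 * L0 := by nlinarith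
  exact mono_transfer h1 hL (by positivity) (by nlinarith) h3

lemma caseK25 {L : ℝ} (hL : (61846:ℝ) * 0.6931471803 / 512 ≤ L) :
    25 * Real.log 2 * Real.log L < 0.96 * L := by
  have hlog2u := Real.log_two_lt_d9
  have hlog2nn : (0:ℝ) ≤ Real.log 2 := (Real.log_pos (by norm_num)).le
  set L0 : ℝ := 61846 * 0.6931471803 / 512 with hL0def
  have h1 : (1:ℝ) ≤ L0 := by norm_num
  have hrho : Real.log L0 ≤ (13082:ℝ) * 0.6931471808 / 2048 := by
    have h := log_ub L0 13082 2048 (by norm_num) (by rw [hL0def, pow_split (2:ℝ) _ 64, pow_split _ 2048 16]; norm_num) (by norm_num)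
    simpa using h
  have hlognn : 0 ≤ Real.log L0 := Real.log_nonneg h1
  have h3 : 25 * Real.log 2 * Real.log L0 < 0.96 * L0 := by nlinarith
  exact mono_transfer h1 hL (by positivity) (by nlinarith) h3

lemma caseSmall {c L : ℝ} (hc : 0 ≤ c) (hc3 : c ≤ 3 * Real.log 2) (hL : 1 ≤ L) :
    c * Real.log L < 0.96 * L := by
  have hlog2u := Real.log_two_lt_d9
  have he : (2.7182818283:ℝ) < Real.exp 1 := Real.exp_one_gt_d9
  have hLpos : (0:ℝ) < L := by linarith
  have hlogE : Real.log L ≤ L / Real.exp 1 := by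
    have hd : Real.log (L / Real.exp 1) ≤ L / Real.exp 1 - 1 :=
      Real.log_le_sub_one_of_pos (by positivity)
    rw [Real.log_div (ne_of_gt hLpos) (ne_of_gt (Real.exp_pos 1)), Real.log_exp] at hd
    linarith
  have hlognn : 0 ≤ Real.log L := Real.log_nonneg hL
  have h5 : 2.7182818283 * Real.log L ≤ L := by
    have ha : 2.7182818283 * Real.log L ≤ Real.exp 1 * Real.log L :=
      mul_le_mul_of_nonneg_right he.le hlognn
    have hb : Real.exp 1 * Real.log L ≤ Real.exp 1 * (L / Real.exp 1) :=
      mul_le_mul_of_nonneg_left hlogE (Real.exp_pos 1).le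
    have hc' : Real.exp 1 * (L / Real.exp 1) = L := by
      field_simp
    linarith
  have h6 : c * Real.log L ≤ 3 * Real.log 2 * Real.log L :=
    mul_le_mul_of_nonneg_right hc3 hlognn
  have h7 : Real.log 2 * Real.log L ≤ 0.6931471808 * Real.log L :=
    mul_le_mul_of_nonneg_right hlog2u.le hlognn
  linarith

lemma prim_lb : ∀ k : ℕ, 26 ≤ k →
    ((k:ℝ)-10) * Real.log ((k:ℝ)-10) + 0.3*((k:ℝ)-10) + 37 ≤ Real.log (prim k) := by
  intro k hk
  induction k, hk using Nat.le_induction with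
  | base =>
    rw [primV26]
    have h1 : Real.log ((16:ℝ)) ≤ 4 * 0.6931471808 := by
      rw [show (16:ℝ) = 2^4 by norm_num, Real.log_pow]
      push_cast
      nlinarith [Real.log_two_lt_d9, (Real.log_pos (show (1:ℝ) < 2 by norm_num)).le]
    have h2 : (4078:ℝ) * 0.6931471803 / 32 ≤ Real.log ((232862364358497360900063316880507363070:ℕ):ℝ) := by
      have h := log_lb ((232862364358497360900063316880507363070:ℕ):ℝ) 4078 32 (by norm_num) (by rw [pow_split (2:ℝ) _ 64]; norm_num) (by norm_num)
      exact h
    push_cast at h2 ⊢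
    norm_num
    nlinarith [h1, h2]
  | succ k hk ih =>
    have hkr : (26:ℝ) ≤ (k:ℝ) := by exact_mod_cast hk
    set j : ℝ := (k:ℝ) - 10 with hjdef
    have hj16 : (16:ℝ) ≤ j := by simp only [hjdef]; linarith
    have hjpos : (0:ℝ) < j := by linarith
    have hprimpos : (0:ℝ) < ((prim k : ℕ):ℝ) := by exact_mod_cast prim_pos k
    have hnthpos : (0:ℝ) < ((Nat.nth Nat.Prime k : ℕ):ℝ) := by
      exact_mod_cast (Nat.prime_nth_prime k).pos
    have hsplit : Real.log ((prim (k+1) : ℕ):ℝ)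
        = Real.log ((prim k : ℕ):ℝ) + Real.log ((Nat.nth Nat.Prime k : ℕ):ℝ) := by
      rw [prim_succ]
      push_cast
      rw [Real.log_mul (ne_of_gt hprimpos) (ne_of_gt hnthpos)]
    have hnth : (15:ℝ)/4 * (j+1) ≤ ((Nat.nth Nat.Prime k : ℕ):ℝ) := by
      have h := nth_prime_lb (le_trans (by norm_num) hk) nthP25
      have hc : (15:ℝ) * (k:ℝ) ≤ 4 * ((Nat.nth Nat.Prime k : ℕ):ℝ) + 135 := by exact_mod_cast h
      simp only [hjdef]
      linarith
    have hlognth : Real.log ((15:ℝ)/4) + Real.log (j+1) ≤ Real.log ((Nat.nth Nat.Prime k : ℕ):ℝ) := by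
      rw [← Real.log_mul (by norm_num) (by positivity)]
      exact Real.log_le_log (by positivity) hnth
    have h154 : (121:ℝ) * 0.6931471803 / 64 ≤ Real.log ((15:ℝ)/4) := by
      have h := log_lb ((15:ℝ)/4) 121 64 (by norm_num) (by norm_num) (by norm_num)
      simpa using h
    have hlogdiff : j * (Real.log (j+1) - Real.log j) ≤ 1 := by
      have hd : Real.log ((j+1)/j) ≤ (j+1)/j - 1 := Real.log_le_sub_one_of_pos (by positivity)
      rw [Real.log_div (by positivity) (ne_of_gt hjpos)] at hd
      have he : (j+1)/j - 1 = 1/j := by rw [div_sub_one (ne_of_gt hjpos)]; ring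
      rw [he] at hd
      have hmul := mul_le_mul_of_nonneg_left hd (le_of_lt hjpos)
      rw [mul_one_div, div_self (ne_of_gt hjpos)] at hmul
      linarith
    have hc : ((k+1:ℕ):ℝ) - 10 = j + 1 := by push_cast; simp only [hjdef]; ring
    rw [hc, hsplit]
    have hexp : (j+1) * Real.log (j+1) = j * Real.log (j+1) + Real.log (j+1) := by ring
    nlinarith [ih, hlognth, h154, hlogdiff]


/-- for `t ≥ 3`, `W(t-1) < t^(0.96 / log log t)`. -/
theorem statement7 (t : ℕ) (ht : 3 ≤ t) :
    (Wnat (t - 1) : ℝ) < (t : ℝ) ^ ((0.96 : ℝ) / Real.log (Real.log t)) := by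
  have ht3 : (3:ℝ) ≤ (t:ℝ) := by exact_mod_cast ht
  have htpos : (0:ℝ) < (t:ℝ) := by linarith
  have hn0 : t - 1 ≠ 0 := by omega
  obtain ⟨k, hkdef⟩ : ∃ k, (t-1).primeFactors.card = k := ⟨_, rfl⟩
  have hlog3 : (1:ℝ) < Real.log t := by
    have h3 : Real.exp 1 < 3 := lt_trans Real.exp_one_lt_d9 (by norm_num)
    have h4 := Real.log_lt_log (Real.exp_pos 1) (lt_of_lt_of_le h3 ht3)
    rwa [Real.log_exp] at h4
  have hLpos : (0:ℝ) < Real.log t := by linarith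
  have hlnln : (0:ℝ) < Real.log (Real.log t) := Real.log_pos hlog3
  have hprimle : prim k ≤ t - 1 := hkdef ▸ prim_le hn0
  have hlogprim : Real.log ((prim k : ℕ):ℝ) ≤ Real.log t := by
    apply Real.log_le_log (by exact_mod_cast prim_pos k)
    have h5 : (prim k : ℕ) ≤ t := le_trans hprimle (Nat.sub_le t 1)
    exact_mod_cast h5
  have key : (k:ℝ) * Real.log 2 * Real.log (Real.log t) < 0.96 * Real.log t := by
    rcases le_or_gt k 3 with hk3 | hk4
    · apply caseSmall (by positivity) ?_ hlog3.le
      have hk3' : (k:ℝ) ≤ 3 := by exact_mod_cast hk3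
      have h2nn : (0:ℝ) ≤ Real.log 2 := (Real.log_pos (by norm_num)).le
      nlinarith
    rcases le_or_gt k 25 with hk25 | hk26
    · interval_cases k
      · rw [primV4] at hlogprim
        have h := log_lb ((210:ℕ):ℝ) 3949 512 (by norm_num) (by rw [pow_split (2:ℝ) _ 256, pow_split _ 512 16]; norm_num) (by norm_num)
        have hA : (3949:ℝ) * 0.6931471803 / 512 ≤ Real.log t := le_trans (by exact_mod_cast h) hlogprim
        exact_mod_cast caseK4 hA
      · rw [primV5] at hlogprim
        have h := log_lb ((2310:ℕ):ℝ) 5720 512 (by norm_num) (by rw [pow_split (2:ℝ) _ 256, pow_split _ 512 16]; norm_num) (by norm_num)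
        have hA : (5720:ℝ) * 0.6931471803 / 512 ≤ Real.log t := le_trans (by exact_mod_cast h) hlogprim
        exact_mod_cast caseK5 hA
      · rw [primV6] at hlogprim
        have h := log_lb ((30030:ℕ):ℝ) 7615 512 (by norm_num) (by rw [pow_split (2:ℝ) _ 256, pow_split _ 512 16]; norm_num) (by norm_num)
        have hA : (7615:ℝ) * 0.6931471803 / 512 ≤ Real.log t := le_trans (by exact_mod_cast h) hlogprim
        exact_mod_cast caseK6 hA
      · rw [primV7] at hlogprim
        have h := log_lb ((510510:ℕ):ℝ) 9708 512 (by norm_num) (by rw [pow_split (2:ℝ) _ 256, pow_split _ 512 16]; norm_num) (by norm_num)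
        have hA : (9708:ℝ) * 0.6931471803 / 512 ≤ Real.log t := le_trans (by exact_mod_cast h) hlogprim
        exact_mod_cast caseK7 hA
      · rw [primV8] at hlogprim
        have h := log_lb ((9699690:ℕ):ℝ) 11883 512 (by norm_num) (by rw [pow_split (2:ℝ) _ 256, pow_split _ 512 16]; norm_num) (by norm_num)
        have hA : (11883:ℝ) * 0.6931471803 / 512 ≤ Real.log t := le_trans (by exact_mod_cast h) hlogprim
        exact_mod_cast caseK8 hA
      · rw [primV9] at hlogprim
        have h := log_lb ((223092870:ℕ):ℝ) 14199 512 (by norm_num) (by rw [pow_split (2:ℝ) _ 256, pow_split _ 512 16]; norm_num) (by norm_num)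
        have hA : (14199:ℝ) * 0.6931471803 / 512 ≤ Real.log t := le_trans (by exact_mod_cast h) hlogprim
        exact_mod_cast caseK9 hA
      · rw [primV10] at hlogprim
        have h := log_lb ((6469693230:ℕ):ℝ) 16686 512 (by norm_num) (by rw [pow_split (2:ℝ) _ 256, pow_split _ 512 16]; norm_num) (by norm_num)
        have hA : (16686:ℝ) * 0.6931471803 / 512 ≤ Real.log t := le_trans (by exact_mod_cast h) hlogprim
        exact_mod_cast caseK10 hA
      · rw [primV11] at hlogprim
        have h := log_lb ((200560490130:ℕ):ℝ) 19223 512 (by norm_num) (by rw [pow_split (2:ℝ) _ 256, pow_split _ 512 16]; norm_num) (by norm_num)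
        have hA : (19223:ℝ) * 0.6931471803 / 512 ≤ Real.log t := le_trans (by exact_mod_cast h) hlogprim
        exact_mod_cast caseK11 hA
      · rw [primV12] at hlogprim
        have h := log_lb ((7420738134810:ℕ):ℝ) 21890 512 (by norm_num) (by rw [pow_split (2:ℝ) _ 256, pow_split _ 512 16]; norm_num) (by norm_num)
        have hA : (21890:ℝ) * 0.6931471803 / 512 ≤ Real.log t := le_trans (by exact_mod_cast h) hlogprim
        exact_mod_cast caseK12 hA
      · rw [primV13] at hlogprim
        have h := log_lb ((304250263527210:ℕ):ℝ) 24633 512 (by norm_num) (by rw [pow_split (2:ℝ) _ 256, pow_split _ 512 16]; norm_num) (by norm_num)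
        have hA : (24633:ℝ) * 0.6931471803 / 512 ≤ Real.log t := le_trans (by exact_mod_cast h) hlogprim
        exact_mod_cast caseK13 hA
      · rw [primV14] at hlogprim
        have h := log_lb ((13082761331670030:ℕ):ℝ) 27411 512 (by norm_num) (by rw [pow_split (2:ℝ) _ 256, pow_split _ 512 16]; norm_num) (by norm_num)
        have hA : (27411:ℝ) * 0.6931471803 / 512 ≤ Real.log t := le_trans (by exact_mod_cast h) hlogprim
        exact_mod_cast caseK14 hA
      · rw [primV15] at hlogprim
        have h := log_lb ((614889782588491410:ℕ):ℝ) 30255 512 (by norm_num) (by rw [pow_split (2:ℝ) _ 256, pow_split _ 512 16]; norm_num) (by norm_num)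
        have hA : (30255:ℝ) * 0.6931471803 / 512 ≤ Real.log t := le_trans (by exact_mod_cast h) hlogprim
        exact_mod_cast caseK15 hA
      · rw [primV16] at hlogprim
        have h := log_lb ((32589158477190044730:ℕ):ℝ) 33188 512 (by norm_num) (by rw [pow_split (2:ℝ) _ 256, pow_split _ 512 16]; norm_num) (by norm_num)
        have hA : (33188:ℝ) * 0.6931471803 / 512 ≤ Real.log t := le_trans (by exact_mod_cast h) hlogprim
        exact_mod_cast caseK16 hA
      · rw [primV17] at hlogprim
        have h := log_lb ((1922760350154212639070:ℕ):ℝ) 36200 512 (by norm_num) (by rw [pow_split (2:ℝ) _ 256, pow_split _ 512 16]; norm_num) (by norm_num)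
        have hA : (36200:ℝ) * 0.6931471803 / 512 ≤ Real.log t := le_trans (by exact_mod_cast h) hlogprim
        exact_mod_cast caseK17 hA
      · rw [primV18] at hlogprim
        have h := log_lb ((117288381359406970983270:ℕ):ℝ) 39236 512 (by norm_num) (by rw [pow_split (2:ℝ) _ 256, pow_split _ 512 16]; norm_num) (by norm_num)
        have hA : (39236:ℝ) * 0.6931471803 / 512 ≤ Real.log t := le_trans (by exact_mod_cast h) hlogprim
        exact_mod_cast caseK18 hA
      · rw [primV19] at hlogprim
        have h := log_lb ((7858321551080267055879090:ℕ):ℝ) 42342 512 (by norm_num) (by rw [pow_split (2:ℝ) _ 256, pow_split _ 512 16]; norm_num) (by norm_num)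
        have hA : (42342:ℝ) * 0.6931471803 / 512 ≤ Real.log t := le_trans (by exact_mod_cast h) hlogprim
        exact_mod_cast caseK19 hA
      · rw [primV20] at hlogprim
        have h := log_lb ((557940830126698960967415390:ℕ):ℝ) 45491 512 (by norm_num) (by rw [pow_split (2:ℝ) _ 256, pow_split _ 512 16]; norm_num) (by norm_num)
        have hA : (45491:ℝ) * 0.6931471803 / 512 ≤ Real.log t := le_trans (by exact_mod_cast h) hlogprim
        exact_mod_cast caseK20 hA
      · rw [primV21] at hlogprim
        have h := log_lb ((40729680599249024150621323470:ℕ):ℝ) 48660 512 (by norm_num) (by rw [pow_split (2:ℝ) _ 256, pow_split _ 512 16]; norm_num) (by norm_num)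
        have hA : (48660:ℝ) * 0.6931471803 / 512 ≤ Real.log t := le_trans (by exact_mod_cast h) hlogprim
        exact_mod_cast caseK21 hA
      · rw [primV22] at hlogprim
        have h := log_lb ((3217644767340672907899084554130:ℕ):ℝ) 51888 512 (by norm_num) (by rw [pow_split (2:ℝ) _ 256, pow_split _ 512 16]; norm_num) (by norm_num)
        have hA : (51888:ℝ) * 0.6931471803 / 512 ≤ Real.log t := le_trans (by exact_mod_cast h) hlogprim
        exact_mod_cast caseK22 hA
      · rw [primV23] at hlogprim
        have h := log_lb ((267064515689275851355624017992790:ℕ):ℝ) 55152 512 (by norm_num) (by rw [pow_split (2:ℝ) _ 256, pow_split _ 512 16]; norm_num) (by norm_num)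
        have hA : (55152:ℝ) * 0.6931471803 / 512 ≤ Real.log t := le_trans (by exact_mod_cast h) hlogprim
        exact_mod_cast caseK23 hA
      · rw [primV24] at hlogprim
        have h := log_lb ((23768741896345550770650537601358310:ℕ):ℝ) 58467 512 (by norm_num) (by rw [pow_split (2:ℝ) _ 256, pow_split _ 512 16]; norm_num) (by norm_num)
        have hA : (58467:ℝ) * 0.6931471803 / 512 ≤ Real.log t := le_trans (by exact_mod_cast h) hlogprim
        exact_mod_cast caseK24 hA
      · rw [primV25] at hlogprim
        have h := log_lb ((2305567963945518424753102147331756070:ℕ):ℝ) 61846 512 (by norm_num) (by rw [pow_split (2:ℝ) _ 256, pow_split _ 512 16]; norm_num) (by norm_num)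
        have hA : (61846:ℝ) * 0.6931471803 / 512 ≤ Real.log t := le_trans (by exact_mod_cast h) hlogprim
        exact_mod_cast caseK25 hA
    · have hk26n : (26:ℕ) ≤ k := hk26
      have hk26r : (26:ℝ) ≤ (k:ℝ) := by exact_mod_cast hk26n
      have hjk : (16:ℝ) ≤ (k:ℝ) - 10 := by linarith
      have hlb := prim_lb k hk26
      have hL0le : ((k:ℝ)-10) * Real.log ((k:ℝ)-10) + 0.3*((k:ℝ)-10) + 37 ≤ Real.log t :=
        le_trans hlb hlogprim
      have hlog16 : (4:ℝ) * 0.6931471803 ≤ Real.log ((k:ℝ)-10) := by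
        have h16 : Real.log (16:ℝ) ≤ Real.log ((k:ℝ)-10) := Real.log_le_log (by norm_num) hjk
        have h2 : (4:ℝ)*0.6931471803 ≤ Real.log 16 := by
          rw [show (16:ℝ)=2^4 by norm_num, Real.log_pow]
          push_cast
          nlinarith [Real.log_two_gt_d9]
        linarith
      have htail := tail_ineq ((k:ℝ)-10) hjk
      have hksub : ((k:ℝ)-10) + 10 = (k:ℝ) := by ring
      rw [hksub] at htail
      have hprodj := mul_le_mul_of_nonneg_left hlog16 (show (0:ℝ) ≤ (k:ℝ)-10 by linarith)
      refine mono_transfer ?_ hL0le (by positivity) ?_ htail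
      · nlinarith
      · nlinarith [Real.log_two_lt_d9, (Real.log_pos (show (1:ℝ)<2 by norm_num)).le]
  have hW : (Wnat (t-1) : ℝ) = (2:ℝ)^k := by
    rw [wnat_eq hn0, hkdef]; push_cast; ring
  have h2k : (2:ℝ)^k = Real.exp ((k:ℝ) * Real.log 2) := by
    rw [← Real.log_pow, Real.exp_log (by positivity)]
  rw [Real.rpow_def_of_pos htpos, hW, h2k]
  apply Real.exp_lt_exp.mpr
  have hr : Real.log t * (0.96 / Real.log (Real.log t)) = 0.96*Real.log t / Real.log (Real.log t) := by
    ring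
  rw [hr, lt_div_iff₀ hlnln]
  linarith [key]
end

section
/- Let q be a prime power, m a positive integer and d a divisor of m. If β ∈ F_{q^m} is normal over F_q, then Tr_{m/d}(β) ∈ F_{q^d} is normal over F_q, i.e., the conjugates {b, b^q, ..., b^{q^{d−1}}} of b = Tr_{m/d}(β) form an F_q-basis of F_{q^d}. -/
open Polynomial

/-- the relative trace of a normal element of `F_{q^m}` is a normal element
of `F_{q^d}` over `F_q`. -/
theorem statement8 (q m d : ℕ) (hm0 : 0 < m) (hd0 : 0 < d) (hdm : d ∣ m)
    {K F : Type*} [Field K] [Fintype K] [Field F] [Algebra K F]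
    (hq : Fintype.card K = q) [FiniteDimensional K F] (hm : Module.finrank K F = m)
    (β : F) (hβ : IsNormalElem q m K β) :
    IsNormalSub q d K (trQ q d (m / d) β) := by
  classical
  obtain ⟨hli, hsp⟩ := hβ
  obtain ⟨nn, hp, hcard⟩ := FiniteField.card K (ringChar K)
  set p := ringChar K with hpdef
  haveI : Fact p.Prime := ⟨hp⟩
  haveI : CharP F p := charP_of_injective_algebraMap (algebraMap K F).injective p
  set n : ℕ := (nn : ℕ) with hndef
  have hq' : q = p ^ n := by rw [← hq, hcard]
  have hq2 : 2 ≤ q := by rw [← hq]; exact Fintype.one_lt_card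
  haveI : Finite F := Module.finite_of_finite K
  haveI : Fintype F := Fintype.ofFinite F
  -- basic facts about the q-power Frobenius
  have hpow : ∀ (k : ℕ) (x : F), x ^ q ^ k = iterateFrobenius F p (n * k) x := by
    intro k x
    rw [iterateFrobenius_def, hq', ← pow_mul]
  have hsum : ∀ (k : ℕ) (s : Finset ℕ) (f : ℕ → F),
      (∑ i ∈ s, f i) ^ q ^ k = ∑ i ∈ s, f i ^ q ^ k := by
    intro k s f
    rw [hpow, map_sum]
    exact Finset.sum_congr rfl fun i _ => (hpow k (f i)).symm
  have hadd : ∀ (k : ℕ) (x y : F), (x + y) ^ q ^ k = x ^ q ^ k + y ^ q ^ k := by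
    intro k x y
    rw [hpow, hpow, hpow, map_add]
  have hKq : ∀ (k : ℕ) (c : K), c ^ q ^ k = c := by
    intro k c
    rw [← hq]
    exact FiniteField.pow_card_pow k c
  have hsmul : ∀ (k : ℕ) (c : K) (x : F), (c • x) ^ q ^ k = c • x ^ q ^ k := by
    intro k c x
    rw [Algebra.smul_def, mul_pow, ← map_pow, hKq, Algebra.smul_def]
  have hcardF : Fintype.card F = q ^ m := by
    rw [Module.card_eq_pow_finrank (K := K) (V := F), hq, hm]
  have hFm : ∀ x : F, x ^ q ^ m = x := by
    intro x
    rw [← hcardF]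
    exact FiniteField.pow_card x
  set b : F := trQ q d (m / d) β with hbdef
  -- conjugates of b
  have hbconj : ∀ j : ℕ, b ^ q ^ j = ∑ i ∈ Finset.range (m / d), β ^ q ^ (i * d + j) := by
    intro j
    rw [hbdef, trQ, hsum]
    refine Finset.sum_congr rfl fun i _ => ?_
    rw [← pow_mul, ← pow_add]
  have hmdd : m / d * d = m := Nat.div_mul_cancel hdm
  -- Part 1 : b is fixed by the q^d-power map
  have hfix : b ^ q ^ d = b := by
    rw [hbconj d, hbdef, trQ]
    have h1 : ∀ i : ℕ, β ^ q ^ (i * d + d) = β ^ q ^ ((i + 1) * d) := by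
      intro i; rw [add_mul, one_mul]
    have h2 : (∑ i ∈ Finset.range (m / d), β ^ q ^ ((i + 1) * d)) + β ^ q ^ (0 * d)
        = (∑ i ∈ Finset.range (m / d), β ^ q ^ (i * d)) + β ^ q ^ (m / d * d) := by
      rw [← Finset.sum_range_succ' (fun i => β ^ q ^ (i * d)) (m / d),
        ← Finset.sum_range_succ (fun i => β ^ q ^ (i * d)) (m / d)]
    have h3 : β ^ q ^ (m / d * d) = β ^ q ^ (0 * d) := by
      rw [hmdd, hFm, zero_mul, pow_zero, pow_one]
    rw [h3] at h2
    simp only [h1]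
    exact add_right_cancel h2
  -- the coefficient reindexing function
  have hdm' : d ≤ m := Nat.le_of_dvd hm0 hdm
  rw [Fintype.linearIndependent_iff] at hli
  -- key sum identity
  have hkey : ∀ c : Fin d → K,
      (∑ j : Fin d, c j • b ^ q ^ (j : ℕ)) =
        ∑ e : Fin m, c ⟨(e : ℕ) % d, Nat.mod_lt _ hd0⟩ • β ^ q ^ (e : ℕ) := by
    intro c
    have hl : (∑ j : Fin d, c j • b ^ q ^ (j : ℕ)) =
        ∑ j ∈ Finset.range d, c ⟨j % d, Nat.mod_lt _ hd0⟩ • b ^ q ^ j := by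
      rw [← Fin.sum_univ_eq_sum_range (fun j => c ⟨j % d, Nat.mod_lt _ hd0⟩ • b ^ q ^ j) d]
      refine Finset.sum_congr rfl fun j _ => ?_
      congr 1
      exact congrArg c (Fin.ext (Nat.mod_eq_of_lt j.2)).symm
    have hr : (∑ e : Fin m, c ⟨(e : ℕ) % d, Nat.mod_lt _ hd0⟩ • β ^ q ^ (e : ℕ)) =
        ∑ e ∈ Finset.range m, c ⟨e % d, Nat.mod_lt _ hd0⟩ • β ^ q ^ e :=
      Fin.sum_univ_eq_sum_range (fun e => c ⟨e % d, Nat.mod_lt _ hd0⟩ • β ^ q ^ e) m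
    rw [hl, hr]
    simp only [hbconj, Finset.smul_sum]
    have hprod := Finset.sum_product' (s := Finset.range d) (t := Finset.range (m / d))
      (f := fun j i => c ⟨j % d, Nat.mod_lt _ hd0⟩ • β ^ q ^ (i * d + j))
    rw [← hprod]
    refine Finset.sum_nbij' (fun x => x.2 * d + x.1) (fun e => (e % d, e / d)) ?_ ?_ ?_ ?_ ?_
    · rintro ⟨j, i⟩ hx
      simp only [Finset.mem_product, Finset.mem_range] at hx ⊢
      obtain ⟨hj, hi⟩ := hx
      have h2 : (i + 1) * d ≤ m / d * d := Nat.mul_le_mul_right d (Nat.succ_le_of_lt hi)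
      have h3 : (i + 1) * d = i * d + d := by ring
      omega
    · intro e he
      simp only [Finset.mem_range] at he
      simp only [Finset.mem_product, Finset.mem_range]
      exact ⟨Nat.mod_lt _ hd0, Nat.div_lt_div_of_lt_of_dvd hdm he⟩
    · rintro ⟨j, i⟩ hx
      simp only [Finset.mem_product, Finset.mem_range] at hx
      obtain ⟨hj, hi⟩ := hx
      have h1 : (i * d + j) % d = j := by
        rw [Nat.mul_add_mod', Nat.mod_eq_of_lt hj]
      have h2 : (i * d + j) / d = i := by
        rw [Nat.add_comm, Nat.add_mul_div_right _ _ hd0, Nat.div_eq_of_lt hj, Nat.zero_add]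
      simp [h1, h2]
    · intro e he
      show e / d * d + e % d = e
      rw [Nat.mul_comm]
      exact Nat.div_add_mod e d
    · rintro ⟨j, i⟩ hx
      simp only [Finset.mem_product, Finset.mem_range] at hx
      obtain ⟨hj, hi⟩ := hx
      have h1 : (i * d + j) % d = j := by
        rw [Nat.mul_add_mod', Nat.mod_eq_of_lt hj]
      congr 2
      exact Fin.ext (by simp only [h1, Nat.mod_eq_of_lt hj])
  -- Part 2 : linear independence of the conjugates of b
  have hli' : LinearIndependent K (fun i : Fin d => b ^ q ^ (i : ℕ)) := by
    rw [Fintype.linearIndependent_iff]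
    intro c hc j
    rw [hkey c] at hc
    have := hli (fun e : Fin m => c ⟨(e : ℕ) % d, Nat.mod_lt _ hd0⟩) hc
      ⟨(j : ℕ), lt_of_lt_of_le j.2 hdm'⟩
    simpa [Nat.mod_eq_of_lt j.2, Fin.eta] using this
  refine ⟨hfix, hli', ?_⟩
  -- Part 3 : the span of the conjugates is the fixed subspace
  let T : Submodule K F :=
    { carrier := {x : F | x ^ q ^ d = x}
      add_mem' := by
        intro x y hx hy
        simp only [Set.mem_setOf_eq] at *
        rw [hadd, hx, hy]
      zero_mem' := by
        simp only [Set.mem_setOf_eq]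
        exact zero_pow (pow_pos (by omega : 0 < q) d).ne'
      smul_mem' := by
        intro c x hx
        simp only [Set.mem_setOf_eq] at *
        rw [hsmul, hx] }
  have hTset : {x : F | x ^ q ^ d = x} = (T : Set F) := rfl
  rw [hTset, Submodule.span_eq]
  -- range ⊆ T
  have hle : Submodule.span K (Set.range fun i : Fin d => b ^ q ^ (i : ℕ)) ≤ T := by
    rw [Submodule.span_le]
    rintro x ⟨j, rfl⟩
    show (b ^ q ^ (j : ℕ)) ^ q ^ d = b ^ q ^ (j : ℕ)
    rw [← pow_mul, ← pow_add, Nat.add_comm, pow_add, pow_mul, hfix]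
  -- cardinality bound on T
  have hcardT : Fintype.card T ≤ q ^ d := by
    set g : F[X] := X ^ q ^ d - X with hgdef
    have hg0 : g ≠ 0 :=
      FiniteField.X_pow_card_pow_sub_X_ne_zero F hd0.ne' (by omega)
    have hdeg : g.natDegree = q ^ d :=
      FiniteField.X_pow_card_pow_sub_X_natDegree_eq F hd0.ne' (by omega)
    have hinj : Function.Injective (fun x : T => (⟨(x : F), by
        rw [Multiset.mem_toFinset, Polynomial.mem_roots hg0]
        show Polynomial.IsRoot g _
        have hx : (x : F) ^ q ^ d = (x : F) := x.2
        simp [hgdef, Polynomial.IsRoot, sub_eq_zero, hx]⟩ : g.roots.toFinset)) := by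
      intro x y hxy
      beta_reduce at hxy
      rw [Subtype.mk.injEq] at hxy
      exact Subtype.ext hxy
    calc Fintype.card T ≤ Fintype.card g.roots.toFinset := Fintype.card_le_of_injective _ hinj
      _ = g.roots.toFinset.card := Fintype.card_coe _
      _ ≤ Multiset.card g.roots := Multiset.toFinset_card_le _
      _ ≤ g.natDegree := Polynomial.card_roots' g
      _ = q ^ d := hdeg
  have hfinT : Module.finrank K T ≤ d := by
    have h1 : Fintype.card T = q ^ Module.finrank K T := by
      rw [Module.card_eq_pow_finrank (K := K) (V := T), hq]
    rw [h1] at hcardT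
    exact (Nat.pow_le_pow_iff_right (by omega)).mp hcardT
  have hfinspan : Module.finrank K
      (Submodule.span K (Set.range fun i : Fin d => b ^ q ^ (i : ℕ))) = d := by
    rw [finrank_span_eq_card hli', Fintype.card_fin]
  exact Submodule.eq_of_le_of_finrank_le hle (by rw [hfinspan]; exact hfinT)
end

section
/- Let q be a prime power and m a positive integer with gcd(m, q) = 1, and let d be a divisor of m. The map ν from the set of elements of F_{q^m} that are normal over F_q to the set of elements of F_{q^d} that are normal over F_q, given by γ ↦ Tr_{m/d}(γ), is a surjective k-to-one correspondence, where k = Φ(x^m − 1)/Φ(x^d − 1); that is, every element of F_{q^d} normal over F_q has exactly Φ(x^m − 1)/Φ(x^d − 1) preimages under ν. -/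
open Polynomial

namespace S10
set_option linter.unusedSectionVars false
set_option maxHeartbeats 1000000
open Polynomial

variable {K F : Type*} [Field K] [Fintype K] [Field F] [Algebra K F]

noncomputable def frob (K F : Type*) [Field K] [Fintype K] [Field F] [Algebra K F] :
    F →ₗ[K] F where
  toFun x := x ^ Fintype.card K
  map_add' x y := by
    obtain ⟨p, hc⟩ := CharP.exists K
    haveI : CharP F p := charP_of_injective_algebraMap (algebraMap K F).injective p
    obtain ⟨n, hp, hcard⟩ := FiniteField.card K p
    haveI : Fact p.Prime := ⟨hp⟩
    simp only [hcard, add_pow_char_pow]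
  map_smul' c x := by
    simp only [Algebra.smul_def, RingHom.id_apply, mul_pow, ← map_pow, FiniteField.pow_card]

lemma frob_apply (x : F) : frob K F x = x ^ Fintype.card K := rfl

lemma frob_pow_apply (i : ℕ) (x : F) : ((frob K F) ^ i) x = x ^ Fintype.card K ^ i := by
  induction i generalizing x with
  | zero => simp
  | succ n ih =>
    rw [pow_succ, Module.End.mul_apply, frob_apply, ih, ← pow_mul, ← pow_succ']

/-- aeval of an explicit Fin-indexed polynomial. -/
lemma aeval_finpoly {n : ℕ} (c : Fin n → K) (x : F) :
    (aeval (frob K F) (∑ i : Fin n, C (c i) * X ^ (i : ℕ))) x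
      = ∑ i : Fin n, c i • x ^ Fintype.card K ^ (i : ℕ) := by
  rw [map_sum, LinearMap.sum_apply]
  refine Finset.sum_congr rfl fun i _ => ?_
  rw [map_mul, aeval_C, map_pow, aeval_X, Module.End.mul_apply, frob_pow_apply,
    Module.algebraMap_end_apply]

lemma finpoly_natDegree_lt {n : ℕ} (hn : 0 < n) (c : Fin n → K) :
    (∑ i : Fin n, C (c i) * X ^ (i : ℕ)).natDegree < n := by
  apply Nat.lt_of_le_of_lt (Polynomial.natDegree_sum_le _ _)
  rw [Finset.fold_max_lt]
  refine ⟨hn, fun i _ => ?_⟩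
  exact Nat.lt_of_le_of_lt (natDegree_C_mul_X_pow_le _ _) i.isLt

lemma finpoly_coeff {n : ℕ} (c : Fin n → K) (j : Fin n) :
    (∑ i : Fin n, C (c i) * X ^ (i : ℕ)).coeff (j : ℕ) = c j := by
  rw [finset_sum_coeff]
  rw [Finset.sum_eq_single j]
  · simp
  · intro i _ hij
    rw [coeff_C_mul, coeff_X_pow, if_neg (by simpa using fun h => hij (Fin.ext h.symm)), mul_zero]
  · simp

lemma aeval_poly_lt (p : K[X]) {n : ℕ} (hp : p.natDegree < n) (x : F) :
    (aeval (frob K F) p) x = ∑ i : Fin n, p.coeff i • x ^ Fintype.card K ^ (i : ℕ) := by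
  rw [Polynomial.aeval_eq_sum_range' hp, LinearMap.sum_apply, Fin.sum_univ_eq_sum_range
    (fun i => p.coeff i • x ^ Fintype.card K ^ i)]
  refine Finset.sum_congr rfl fun i _ => ?_
  rw [LinearMap.smul_apply, frob_pow_apply]


lemma finiteF [FiniteDimensional K F] : Finite F :=
  Finite.of_equiv _ (Module.finBasis K F).repr.toEquiv.symm

lemma two_le_q : 2 ≤ Fintype.card K := Fintype.one_lt_card

lemma pow_card_finrank [FiniteDimensional K F] (x : F) :
    x ^ Fintype.card K ^ Module.finrank K F = x := by
  have : Finite F := finiteF (K := K)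
  cases nonempty_fintype F
  rw [← Module.card_eq_pow_finrank (K := K) (V := F)]
  exact FiniteField.pow_card x

lemma aeval_xm_sub_one [FiniteDimensional K F] {m : ℕ} (hm : Module.finrank K F = m) :
    aeval (frob K F) ((X : K[X]) ^ m - 1) = 0 := by
  apply LinearMap.ext fun x => ?_
  rw [map_sub, map_pow, aeval_X, map_one, LinearMap.sub_apply, frob_pow_apply,
    LinearMap.zero_apply, Module.End.one_apply, ← hm, pow_card_finrank, sub_self]

/-- kernel of `aeval frob h` has `finrank ≤ natDegree h` for monic `h`. -/
lemma finrank_ker_le [FiniteDimensional K F] {h : K[X]} (hh : h.Monic) :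
    Module.finrank K (LinearMap.ker (aeval (frob K F) h)) ≤ h.natDegree := by
  classical
  have hF : Finite F := finiteF (K := K)
  cases nonempty_fintype F
  set q := Fintype.card K with hq
  have hq2 : 2 ≤ q := two_le_q
  set D := h.natDegree with hD
  set L : F[X] := ∑ i ∈ Finset.range (D + 1), C (algebraMap K F (h.coeff i)) * X ^ (q ^ i)
    with hL
  have hinj : ∀ a b : ℕ, q ^ a = q ^ b → a = b := fun a b hab =>
    Nat.pow_right_injective hq2 hab
  have hLD : L.coeff (q ^ D) = 1 := by
    rw [hL, finset_sum_coeff, Finset.sum_eq_single D]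
    · rw [coeff_C_mul, coeff_X_pow, if_pos rfl, mul_one, Monic.coeff_natDegree hh, map_one]
    · intro i _ hiD
      rw [coeff_C_mul, coeff_X_pow, if_neg (fun hc => hiD (hinj _ _ hc.symm)), mul_zero]
    · intro hD'; exact absurd (Finset.self_mem_range_succ D) hD'
  have hL0 : L ≠ 0 := fun h0 => by simp [h0] at hLD
  have hdeg : L.natDegree ≤ q ^ D := by
    refine Polynomial.natDegree_sum_le_of_forall_le _ _ fun i hi => ?_
    refine le_trans (natDegree_C_mul_X_pow_le _ _) ?_
    exact Nat.pow_le_pow_right (le_trans (by norm_num) hq2)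
      (Nat.lt_succ_iff.mp (Finset.mem_range.mp hi))
  have hroot : ∀ x : F, x ∈ LinearMap.ker (aeval (frob K F) h) → L.IsRoot x := by
    intro x hx
    rw [LinearMap.mem_ker] at hx
    have hev := aeval_poly_lt h (n := D + 1) (Nat.lt_succ_self D) x
    rw [hx] at hev
    have : L.eval x = ∑ i : Fin (D + 1), h.coeff i • x ^ q ^ (i : ℕ) := by
      rw [hL, eval_finset_sum, Fin.sum_univ_eq_sum_range (fun i => h.coeff i • x ^ q ^ i)]
      refine Finset.sum_congr rfl fun i _ => ?_
      rw [eval_mul, eval_C, eval_pow, eval_X, Algebra.smul_def]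
    rw [IsRoot, this, ← hev]
  have hcard : Fintype.card (LinearMap.ker (aeval (frob K F) h)) ≤ q ^ D := by
    have h1 : Fintype.card (LinearMap.ker (aeval (frob K F) h)) ≤ L.roots.toFinset.card := by
      rw [← Fintype.card_coe]
      exact Fintype.card_le_of_injective
        (fun x : LinearMap.ker (aeval (frob K F) h) =>
          (⟨x.1, by rw [Multiset.mem_toFinset, mem_roots hL0]; exact hroot x.1 x.2⟩ :
            L.roots.toFinset))
        (fun a b hab => Subtype.ext (Subtype.mk_eq_mk.mp hab))
    refine le_trans h1 (le_trans (Multiset.toFinset_card_le _) (le_trans ?_ hdeg))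
    exact_mod_cast Polynomial.card_roots' L
  have hcard2 : Fintype.card (LinearMap.ker (aeval (frob K F) h)) =
      q ^ Module.finrank K (LinearMap.ker (aeval (frob K F) h)) :=
    Module.card_eq_pow_finrank (K := K)
  rw [hcard2] at hcard
  exact (Nat.pow_le_pow_iff_right hq2).mp hcard

/-- lower bound: if `h` is monic and `h * w = X^m - 1` then `natDegree h ≤ finrank ker`. -/
lemma le_finrank_ker [FiniteDimensional K F] {m : ℕ} (hm : Module.finrank K F = m)
    {h w : K[X]} (hh : h.Monic) (hw : h * w = (X : K[X]) ^ m - 1) (hm0 : 0 < m) :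
    h.natDegree ≤ Module.finrank K (LinearMap.ker (aeval (frob K F) h)) := by
  have hfdeg : ((X : K[X]) ^ m - 1).natDegree = m := by
    rw [← C_1 (R := K)]; exact natDegree_X_pow_sub_C
  have hf0 : ((X : K[X]) ^ m - 1) ≠ 0 := by
    intro h0; rw [h0] at hfdeg; simp at hfdeg; omega
  have hw0 : w ≠ 0 := by rintro rfl; rw [mul_zero] at hw; exact hf0 hw.symm
  have hfm : ((X : K[X]) ^ m - 1).Monic := by
    rw [← C_1 (R := K)]; exact monic_X_pow_sub_C 1 (by omega)
  have hwm : w.Monic := hh.of_mul_monic_left (hw.symm ▸ hfm)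
  have hdegs : h.natDegree + w.natDegree = m := by
    have h2 := natDegree_mul (hh.ne_zero) hw0
    rw [hw, hfdeg] at h2
    omega
  -- range (aeval w) ≤ ker (aeval h)
  have hle : LinearMap.range (aeval (frob K F) w) ≤ LinearMap.ker (aeval (frob K F) h) := by
    rintro x ⟨y, rfl⟩
    rw [LinearMap.mem_ker, ← Module.End.mul_apply, ← map_mul, hw, aeval_xm_sub_one hm,
      LinearMap.zero_apply]
  have h1 := LinearMap.finrank_range_add_finrank_ker (aeval (frob K F) w)
  rw [hm] at h1
  have h2 := finrank_ker_le (F := F) hwm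
  have h3 := Submodule.finrank_mono hle
  omega


/-- If two polys kill x and are coprime then x = 0. -/
lemma eq_zero_of_coprime_kill {r s : K[X]} {x : F} (hco : IsCoprime r s)
    (hr : (aeval (frob K F) r) x = 0) (hs : (aeval (frob K F) s) x = 0) : x = 0 := by
  obtain ⟨a, b, hab⟩ := hco
  have := congrArg (fun p => (aeval (frob K F) p) x) hab
  simpa [map_mul, Module.End.mul_apply, hr, hs] using this.symm

/-- irreducible `g` killing `x ≠ 0`: any other killer is divisible by `g`. -/
lemma dvd_of_irreducible_kill {g r : K[X]} {x : F} (hg : Irreducible g) (hx : x ≠ 0)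
    (hgx : (aeval (frob K F) g) x = 0) (hrx : (aeval (frob K F) r) x = 0) : g ∣ r := by
  by_contra hdvd
  exact hx (eq_zero_of_coprime_kill (hg.coprime_iff_not_dvd.mpr hdvd) hgx hrx)

lemma mKne {m : ℕ} (hm0 : 0 < m) (hcop : Nat.Coprime m (Fintype.card K)) : (m : K) ≠ 0 := by
  obtain ⟨p, hc⟩ := CharP.exists K
  haveI := hc
  obtain ⟨n, hp, hcard⟩ := FiniteField.card K p
  rw [Ne, CharP.cast_eq_zero_iff K p]
  intro hdvd
  have hpq : p ∣ Fintype.card K := hcard ▸ dvd_pow_self p n.ne_zero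
  have := Nat.eq_one_of_dvd_coprimes hcop hdvd hpq
  exact hp.one_lt.ne' this

lemma sep_f {m : ℕ} (hm0 : 0 < m) (hcop : Nat.Coprime m (Fintype.card K)) :
    ((X : K[X]) ^ m - 1).Separable := by
  rw [← C_1 (R := K)]
  exact separable_X_pow_sub_C 1 (mKne hm0 hcop) one_ne_zero


/-- product of distinct monic primes all dividing p divides p -/
lemma multiset_prod_dvd :
    ∀ (s : Multiset K[X]), ∀ p : K[X], s.Nodup → (∀ g ∈ s, Prime g ∧ g.Monic) →
      (∀ g ∈ s, g ∣ p) → s.prod ∣ p := by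
  intro s
  induction s using Multiset.induction_on with
  | empty => intro p _ _ _; simp
  | cons a s ih =>
    intro p hnodup hprime hdvd
    obtain ⟨t, rfl⟩ := hdvd a (Multiset.mem_cons_self a s)
    rw [Multiset.prod_cons]
    refine mul_dvd_mul_left a (ih t (Multiset.nodup_cons.mp hnodup).2
      (fun g hg => hprime g (Multiset.mem_cons_of_mem hg)) ?_)
    intro g hg
    have hga : ¬ g ∣ a := by
      intro hdvd'
      have hass : g = a := eq_of_monic_of_associated (hprime g (Multiset.mem_cons_of_mem hg)).2
        (hprime a (Multiset.mem_cons_self a s)).2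
        (Irreducible.associated_of_dvd
          (hprime g (Multiset.mem_cons_of_mem hg)).1.irreducible
          (hprime a (Multiset.mem_cons_self a s)).1.irreducible hdvd')
      exact (Multiset.nodup_cons.mp hnodup).1 (hass ▸ hg)
    have := hdvd g (Multiset.mem_cons_of_mem hg)
    exact ((hprime g (Multiset.mem_cons_of_mem hg)).1.dvd_or_dvd this).resolve_left hga


section Exists
open UniqueFactorizationMonoid

lemma exists_gamma0 [FiniteDimensional K F] {m : ℕ} (hm : Module.finrank K F = m)
    (hm0 : 0 < m) (hcop : Nat.Coprime m (Fintype.card K)) :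
    ∃ γ₀ : F, ∀ p : K[X], (aeval (frob K F) p) γ₀ = 0 → ((X : K[X]) ^ m - 1) ∣ p := by
  classical
  set f : K[X] := X ^ m - 1 with hf
  have hfdeg : f.natDegree = m := by rw [hf, ← C_1 (R := K)]; exact natDegree_X_pow_sub_C
  have hf0 : f ≠ 0 := by intro h0; rw [h0] at hfdeg; simp at hfdeg; omega
  have hsqf : Squarefree f := (sep_f hm0 hcop).squarefree
  set s := normalizedFactors f with hs
  have hprod : Associated s.prod f := prod_normalizedFactors hf0
  have hnodup : s.Nodup := (squarefree_iff_nodup_normalizedFactors hf0).mp hsqf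
  have hmono : ∀ g ∈ s, Prime g ∧ g.Monic := by
    intro g hg
    refine ⟨prime_of_normalized_factor g hg, ?_⟩
    have := normalize_normalized_factor g hg
    rw [← this]
    exact monic_normalize (prime_of_normalized_factor g hg).ne_zero
  -- choose nonzero kernel elements
  have hker : ∀ g ∈ s, ∃ x : F, x ≠ 0 ∧ (aeval (frob K F) g) x = 0 := by
    intro g hg
    obtain ⟨w, hw⟩ := dvd_of_mem_normalizedFactors hg
    have h1 : g.natDegree ≤ Module.finrank K (LinearMap.ker (aeval (frob K F) g)) :=
      le_finrank_ker hm (hmono g hg).2 (by rw [← hw, hf]) hm0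
    have h2 : 0 < g.natDegree := (hmono g hg).1.irreducible.natDegree_pos
    have h3 : LinearMap.ker (aeval (frob K F) g) ≠ ⊥ := by
      intro hbot
      rw [hbot, finrank_bot] at h1
      omega
    obtain ⟨x, hx1, hx2⟩ := Submodule.exists_mem_ne_zero_of_ne_bot h3
    exact ⟨x, hx2, hx1⟩
  let v : K[X] → F := fun g => if hg : g ∈ s then (hker g hg).choose else 0
  have hv1 : ∀ g ∈ s, v g ≠ 0 := fun g hg => by
    simp only [v, dif_pos hg]; exact (hker g hg).choose_spec.1
  have hv2 : ∀ g ∈ s, (aeval (frob K F) g) (v g) = 0 := fun g hg => by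
    simp only [v, dif_pos hg]; exact (hker g hg).choose_spec.2
  refine ⟨∑ g ∈ s.toFinset, v g, fun p hp => ?_⟩
  have hgdvd : ∀ g ∈ s, g ∣ p := by
    intro g hg
    set w : K[X] := (s.erase g).prod with hwdef
    -- aeval (w * p) kills every v g'
    have hkill : ∀ g' ∈ s.toFinset, g' ≠ g → (aeval (frob K F) (w * p)) (v g') = 0 := by
      intro g' hg's hne
      have hg'e : g' ∈ s.erase g := (Multiset.mem_erase_of_ne hne).mpr (Multiset.mem_toFinset.mp hg's)
      obtain ⟨t, ht⟩ : g' ∣ w := Multiset.dvd_prod hg'e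
      have hre : w * p = (t * p) * g' := by rw [ht]; ring
      rw [hre, map_mul, Module.End.mul_apply, hv2 g' (Multiset.mem_toFinset.mp hg's), map_zero]
    have hsum : (aeval (frob K F) (w * p)) (∑ g' ∈ s.toFinset, v g') = 0 := by
      rw [map_mul, Module.End.mul_apply, hp, map_zero]
    rw [map_sum] at hsum
    rw [Finset.sum_eq_single g] at hsum
    · -- now: aeval (w * p) (v g) = 0 ⇒ g ∣ w * p ⇒ g ∣ p
      have hdv : g ∣ w * p :=
        dvd_of_irreducible_kill (hmono g hg).1.irreducible (hv1 g hg) (hv2 g hg) hsum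
      rcases (hmono g hg).1.dvd_or_dvd hdv with h | h
      · exfalso
        obtain ⟨g'', hg''mem, hg''⟩ := (hmono g hg).1.exists_mem_multiset_dvd h
        have : g = g'' := eq_of_monic_of_associated (hmono g hg).2
          (hmono g'' (Multiset.mem_of_mem_erase hg''mem)).2
          (Irreducible.associated_of_dvd (hmono g hg).1.irreducible
            (hmono g'' (Multiset.mem_of_mem_erase hg''mem)).1.irreducible hg'')
        rw [this] at hg
        exact (Multiset.Nodup.notMem_erase hnodup) (this ▸ hg''mem)
      · exact h
    · intro g' hg's hne
      exact hkill g' hg's hne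
    · intro hgs
      exact absurd (Multiset.mem_toFinset.mpr hg) hgs
  have hpd : s.prod ∣ p := multiset_prod_dvd s p hnodup hmono hgdvd
  exact (hprod.symm.dvd).trans hpd


end Exists

section Quot
variable {K : Type*} [Field K]

lemma coprime_add_mul {R : Type*} [CommRing R] {a b : R} (h : IsCoprime a b) (c : R) :
    IsCoprime (a + c * b) b := by
  obtain ⟨u, v, huv⟩ := h
  exact ⟨u, v - u * c, by linear_combination huv⟩

lemma isUnit_mk_iff (f g : K[X]) :
    IsUnit (Ideal.Quotient.mk (Ideal.span {f}) g) ↔ IsCoprime g f := by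
  constructor
  · rintro ⟨u, hu⟩
    obtain ⟨b, hb⟩ := Ideal.Quotient.mk_surjective (↑u⁻¹ : K[X] ⧸ Ideal.span {f})
    have h1 : Ideal.Quotient.mk (Ideal.span {f}) (g * b - 1) = 0 := by
      rw [map_sub, map_one, map_mul, hb, ← hu, Units.mul_inv, sub_self]
    rw [Ideal.Quotient.eq_zero_iff_mem, Ideal.mem_span_singleton] at h1
    obtain ⟨c, hc⟩ := h1
    exact ⟨b, -c, by linear_combination hc⟩
  · rintro ⟨a, b, hab⟩
    refine IsUnit.of_mul_eq_one (Ideal.Quotient.mk _ a) ?_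
    rw [← map_mul, ← map_one (Ideal.Quotient.mk (Ideal.span {f})), Ideal.Quotient.eq,
      Ideal.mem_span_singleton]
    exact ⟨-b, by linear_combination hab⟩

lemma finite_quot {f : K[X]} [Fintype K] (hf : f ≠ 0) :
    Finite (K[X] ⧸ Ideal.span {f}) := by
  have : Finite (AdjoinRoot f) :=
    Finite.of_equiv _ (AdjoinRoot.powerBasis hf).basis.repr.toEquiv.symm
  exact this

/-- lifting units along the factor map -/
lemma lift_coprime {fd e g : K[X]} (hco : IsCoprime fd e) (hg : IsCoprime g fd) :
    ∃ p : K[X], IsCoprime p (fd * e) ∧ fd ∣ p - g := by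
  obtain ⟨u, v, huv⟩ := hco
  refine ⟨g * v * e + u * fd, ?_, ⟨u * (1 - g), by linear_combination g * huv⟩⟩
  have hv : IsCoprime v fd := ⟨e, u, by linear_combination huv⟩
  have he : IsCoprime e fd := ⟨v, u, by linear_combination huv⟩
  have h1 : IsCoprime (g * v * e + u * fd) fd :=
    coprime_add_mul ((hg.mul_left hv).mul_left he) u
  have h2 : IsCoprime (g * v * e + u * fd) e := ⟨1, -(g - 1) * v, by linear_combination huv⟩
  exact h1.mul_right h2

/-- fibers of a surjective group hom have size |G|/|H|. -/
lemma fiber_card {G H : Type*} [Group G] [Group H] [Finite G] (φ : G →* H)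
    (hφ : Function.Surjective φ) (h₀ : H) :
    Nat.card {u : G // φ u = h₀} = Nat.card G / Nat.card H := by
  have hH : Finite H := Finite.of_surjective φ hφ
  obtain ⟨u₀, hu₀⟩ := hφ h₀
  -- equiv with kernel
  have e : {u : G // φ u = h₀} ≃ φ.ker := by
    refine ⟨fun u => ⟨u.1 * u₀⁻¹, ?_⟩, fun v => ⟨v.1 * u₀, ?_⟩, fun u => ?_, fun v => ?_⟩
    · rw [MonoidHom.mem_ker, map_mul, u.2, map_inv, hu₀, mul_inv_cancel]
    · rw [map_mul, hu₀, MonoidHom.mem_ker.mp v.2, one_mul]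
    · ext; simp
    · ext; simp
  rw [Nat.card_congr e]
  have h1 : Nat.card G = Nat.card (G ⧸ φ.ker) * Nat.card φ.ker :=
    Subgroup.card_eq_card_quotient_mul_card_subgroup φ.ker
  have h2 : Nat.card (G ⧸ φ.ker) = Nat.card H :=
    Nat.card_congr (QuotientGroup.quotientKerEquivOfSurjective φ hφ).toEquiv
  rw [h2] at h1
  have hHpos : 0 < Nat.card H := Nat.card_pos
  rw [h1, Nat.mul_div_cancel_left _ hHpos]


end Quot

end S10

/-- the trace map from normal elements of `F_{q^m}` to normal elements of
`F_{q^d}` is a surjective `Φ(x^m-1)/Φ(x^d-1)`-to-one correspondence. -/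
theorem statement10 (q m d : ℕ) (hm0 : 0 < m) (hcop : Nat.Coprime m q) (hd0 : 0 < d)
    (hdm : d ∣ m) {K F : Type*} [Field K] [Fintype K] [Field F] [Algebra K F]
    (hq : Fintype.card K = q) [FiniteDimensional K F] (hm : Module.finrank K F = m) :
    (∀ γ : F, IsNormalElem q m K γ → IsNormalSub q d K (trQ q d (m / d) γ)) ∧
    (∀ c : F, IsNormalSub q d K c →
      Nat.card {γ : F // IsNormalElem q m K γ ∧ trQ q d (m / d) γ = c} =
        PhiQ ((X : K[X]) ^ m - 1) / PhiQ ((X : K[X]) ^ d - 1)) := by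
  classical
  subst hq
  have hF : Finite F := S10.finiteF (K := K)
  set σ := S10.frob K F with hσ
  set f : K[X] := X ^ m - 1 with hf
  set fd : K[X] := X ^ d - 1 with hfd
  set e : K[X] := ∑ i ∈ Finset.range (m / d), ((X : K[X]) ^ d) ^ i with he
  have hmd : d * (m / d) = m := Nat.mul_div_cancel' hdm
  have hfe : fd * e = f := by
    rw [hfd, he, hf, mul_comm, geom_sum_mul, ← pow_mul, hmd]
  have hfdeg : f.natDegree = m := by rw [hf, ← C_1 (R := K)]; exact natDegree_X_pow_sub_C
  have hfddeg : fd.natDegree = d := by rw [hfd, ← C_1 (R := K)]; exact natDegree_X_pow_sub_C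
  have hfm : f.Monic := by rw [hf, ← C_1 (R := K)]; exact monic_X_pow_sub_C 1 (by omega)
  have hfdm : fd.Monic := by rw [hfd, ← C_1 (R := K)]; exact monic_X_pow_sub_C 1 (by omega)
  have hf0 : f ≠ 0 := hfm.ne_zero
  have hfd0 : fd ≠ 0 := hfdm.ne_zero
  have he0 : e ≠ 0 := fun h0 => hf0 (by rw [← hfe, h0, mul_zero])
  have hsqf : Squarefree f := by rw [hf]; exact (S10.sep_f hm0 hcop).squarefree
  have hcofde : IsCoprime fd e := by
    rw [← EuclideanDomain.gcd_isUnit_iff]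
    apply hsqf
    rw [← hfe]
    exact mul_dvd_mul (EuclideanDomain.gcd_dvd_left _ _) (EuclideanDomain.gcd_dvd_right _ _)
  obtain ⟨γ₀, hγ₀⟩ := S10.exists_gamma0 hm hm0 hcop
  have haf : aeval σ f = 0 := by rw [hf, hσ]; exact S10.aeval_xm_sub_one hm
  have hker : ∀ p : K[X], (aeval σ p) γ₀ = 0 ↔ f ∣ p := by
    intro p
    constructor
    · intro h
      rw [hf]
      exact hγ₀ p h
    · rintro ⟨s, rfl⟩
      rw [mul_comm, map_mul, Module.End.mul_apply, haf, LinearMap.zero_apply, map_zero]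
  have hker' : ∀ p p' : K[X], f ∣ p - p' → (aeval σ p) γ₀ = (aeval σ p') γ₀ := by
    intro p p' hdvd
    have := (hker (p - p')).mpr hdvd
    rw [map_sub, LinearMap.sub_apply, sub_eq_zero] at this
    exact this
  have hconj : ∀ (r : K[X]) (i : ℕ),
      (aeval σ r γ₀) ^ (Fintype.card K) ^ i = aeval σ (X ^ i * r) γ₀ := by
    intro r i
    rw [map_mul, map_pow, aeval_X, Module.End.mul_apply, S10.frob_pow_apply]
  have hcomb : ∀ (r : K[X]) (n : ℕ) (c : Fin n → K),
      ∑ i : Fin n, c i • (aeval σ r γ₀) ^ (Fintype.card K) ^ (i : ℕ)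
        = aeval σ ((∑ i : Fin n, C (c i) * X ^ (i : ℕ)) * r) γ₀ := by
    intro r n c
    rw [Finset.sum_mul, map_sum, LinearMap.sum_apply]
    refine Finset.sum_congr rfl fun i _ => ?_
    rw [hconj r i, mul_assoc, map_mul (aeval σ) (C (c i)) (X ^ (i : ℕ) * r), aeval_C,
      Module.End.mul_apply, Module.algebraMap_end_apply]
  have hpc0 : ∀ (n : ℕ) (c : Fin n → K), 0 < n →
      f ∣ (∑ i : Fin n, C (c i) * X ^ (i : ℕ)) → n ≤ m → ∀ i, c i = 0 := by
    intro n c hn hdvd hnm i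
    have hp0 : (∑ i : Fin n, C (c i) * X ^ (i : ℕ)) = 0 := by
      by_contra hne
      have := Polynomial.natDegree_le_of_dvd hdvd hne
      have h2 := S10.finpoly_natDegree_lt hn c
      omega
    have := S10.finpoly_coeff c i
    rw [hp0] at this
    simpa using this.symm
  -- normality criterion
  have hnormal_iff : ∀ r : K[X],
      IsNormalElem (Fintype.card K) m K (aeval σ r γ₀) ↔ IsCoprime r f := by
    intro r
    constructor
    · intro hn
      by_contra hco
      have hgcd : ¬ IsUnit (EuclideanDomain.gcd r f) := fun h =>
        hco (EuclideanDomain.gcd_isUnit_iff.mp h)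
      obtain ⟨r', hr'⟩ := EuclideanDomain.gcd_dvd_left r f
      obtain ⟨w, hw⟩ := EuclideanDomain.gcd_dvd_right r f
      set u := EuclideanDomain.gcd r f with hu
      have hu0 : u ≠ 0 := fun h0 => hf0 (by rw [hw, h0, zero_mul])
      have hudeg : 0 < u.natDegree := by
        rcases Nat.eq_zero_or_pos u.natDegree with h | h
        · obtain ⟨a, ha⟩ := Polynomial.natDegree_eq_zero.mp h
          exact absurd (ha ▸ isUnit_C.mpr (IsUnit.mk0 a (by rintro rfl; simp at ha; exact hu0 ha.symm))) hgcd
        · exact h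
      have hw0 : w ≠ 0 := fun h0 => hf0 (by rw [hw, h0, mul_zero])
      have hwdeg : w.natDegree < m := by
        have := Polynomial.natDegree_mul hu0 hw0
        rw [← hw, hfdeg] at this
        omega
      have hkill : (aeval σ w) (aeval σ r γ₀) = 0 := by
        rw [← Module.End.mul_apply, ← map_mul, hker]
        exact ⟨r', by rw [hw, hr']; ring⟩
      have hdep := Fintype.linearIndependent_iff.mp hn.1 (fun i : Fin m => w.coeff i) ?_
      · apply hw0
        ext j
        rcases Nat.lt_or_ge j m with hj | hj
        · simpa using hdep ⟨j, hj⟩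
        · simp [Polynomial.coeff_eq_zero_of_natDegree_lt (lt_of_lt_of_le hwdeg hj)]
      · rw [← S10.aeval_poly_lt w hwdeg (aeval σ r γ₀)] at *
        exact hkill
    · intro hco
      have hli : LinearIndependent K
          (fun i : Fin m => (aeval σ r γ₀) ^ (Fintype.card K) ^ (i : ℕ)) := by
        rw [Fintype.linearIndependent_iff]
        intro c hc
        rw [hcomb r m c, hker] at hc
        have hdvd : f ∣ (∑ i : Fin m, C (c i) * X ^ (i : ℕ)) :=
          (hco.symm).dvd_of_dvd_mul_right hc
        exact hpc0 m c hm0 hdvd le_rfl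
      haveI : Nonempty (Fin m) := ⟨⟨0, hm0⟩⟩
      have hcard : Fintype.card (Fin m) = Module.finrank K F := by simp [hm]
      refine ⟨hli, ?_⟩
      rw [← coe_basisOfLinearIndependentOfCardEqFinrank hli hcard]
      exact Module.Basis.span_eq _
  have hsurj : ∀ x : F, ∃ r : K[X], aeval σ r γ₀ = x := by
    intro x
    have hγn : IsNormalElem (Fintype.card K) m K γ₀ := by
      have := (hnormal_iff 1).mpr isCoprime_one_left
      simpa using this
    have hx : x ∈ Submodule.span K
        (Set.range fun i : Fin m => γ₀ ^ (Fintype.card K) ^ (i : ℕ)) := by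
      rw [hγn.2]; trivial
    rw [Submodule.mem_span_range_iff_exists_fun] at hx
    obtain ⟨c, hc⟩ := hx
    refine ⟨∑ i : Fin m, C (c i) * X ^ (i : ℕ), ?_⟩
    have h1 := hcomb 1 m c
    simp only [map_one, Module.End.one_apply, mul_one] at h1
    rw [← h1, hc]
  have htr : ∀ x : F, trQ (Fintype.card K) d (m / d) x = (aeval σ e) x := by
    intro x
    rw [trQ, he, map_sum, LinearMap.sum_apply]
    refine Finset.sum_congr rfl fun i _ => ?_
    rw [map_pow, map_pow, aeval_X, ← pow_mul, S10.frob_pow_apply, Nat.mul_comm d i]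
  have htr' : ∀ r : K[X], trQ (Fintype.card K) d (m / d) (aeval σ r γ₀) =
      aeval σ (e * r) γ₀ := by
    intro r
    rw [htr, ← Module.End.mul_apply, ← map_mul]
  have hψS : ∀ p : K[X],
      (aeval σ (e * p) γ₀) ^ (Fintype.card K) ^ d = aeval σ (e * p) γ₀ := by
    intro p
    rw [hconj (e * p) d]
    apply hker'
    exact ⟨p, by rw [← hfe, hfd]; ring⟩
  have hψinj : ∀ p p' : K[X],
      aeval σ (e * p) γ₀ = aeval σ (e * p') γ₀ ↔ fd ∣ (p - p') := by
    intro p p'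
    have heq : aeval σ (e * p) γ₀ - aeval σ (e * p') γ₀ = aeval σ (e * (p - p')) γ₀ := by
      rw [mul_sub, map_sub, LinearMap.sub_apply]
    rw [← sub_eq_zero, heq, hker, ← hfe, mul_comm fd e]
    exact mul_dvd_mul_iff_left he0
  have hSker : {x : F | x ^ (Fintype.card K) ^ d = x} = ↑(LinearMap.ker (aeval σ fd)) := by
    ext x
    simp only [Set.mem_setOf_eq, SetLike.mem_coe, LinearMap.mem_ker, hfd, map_sub, map_pow,
      aeval_X, map_one, LinearMap.sub_apply, Module.End.one_apply, sub_eq_zero]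
    rw [S10.frob_pow_apply]
  have hdim : Module.finrank K (LinearMap.ker (aeval σ fd)) = d := by
    refine le_antisymm ?_ ?_
    · simpa [hfddeg] using S10.finrank_ker_le (F := F) hfdm
    · have := S10.le_finrank_ker hm hfdm (by rw [hfe, hf]) hm0
      rwa [hfddeg] at this
  -- subfield normality criterion
  have hsub_iff : ∀ g : K[X],
      IsNormalSub (Fintype.card K) d K (aeval σ (e * g) γ₀) ↔ IsCoprime g fd := by
    intro g
    constructor
    · intro hn
      by_contra hco
      have hgcd : ¬ IsUnit (EuclideanDomain.gcd g fd) := fun h =>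
        hco (EuclideanDomain.gcd_isUnit_iff.mp h)
      obtain ⟨g', hg'⟩ := EuclideanDomain.gcd_dvd_left g fd
      obtain ⟨w, hw⟩ := EuclideanDomain.gcd_dvd_right g fd
      set u := EuclideanDomain.gcd g fd with hu
      have hu0 : u ≠ 0 := fun h0 => hfd0 (by rw [hw, h0, zero_mul])
      have hudeg : 0 < u.natDegree := by
        rcases Nat.eq_zero_or_pos u.natDegree with h | h
        · obtain ⟨a, ha⟩ := Polynomial.natDegree_eq_zero.mp h
          exact absurd (ha ▸ isUnit_C.mpr (IsUnit.mk0 a (by rintro rfl; simp at ha; exact hu0 ha.symm))) hgcd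
        · exact h
      have hw0 : w ≠ 0 := fun h0 => hfd0 (by rw [hw, h0, mul_zero])
      have hwdeg : w.natDegree < d := by
        have := Polynomial.natDegree_mul hu0 hw0
        rw [← hw, hfddeg] at this
        omega
      have hkill : (aeval σ w) (aeval σ (e * g) γ₀) = 0 := by
        rw [← Module.End.mul_apply, ← map_mul, hker]
        refine ⟨g', ?_⟩
        rw [← hfe, hw, hg']
        ring
      have hdep := Fintype.linearIndependent_iff.mp hn.2.1 (fun i : Fin d => w.coeff i) ?_
      · apply hw0
        ext j
        rcases Nat.lt_or_ge j d with hj | hj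
        · simpa using hdep ⟨j, hj⟩
        · simp [Polynomial.coeff_eq_zero_of_natDegree_lt (lt_of_lt_of_le hwdeg hj)]
      · rw [← S10.aeval_poly_lt w hwdeg (aeval σ (e * g) γ₀)] at *
        exact hkill
    · intro hco
      have hli : LinearIndependent K
          (fun i : Fin d => (aeval σ (e * g) γ₀) ^ (Fintype.card K) ^ (i : ℕ)) := by
        rw [Fintype.linearIndependent_iff]
        intro c hc
        rw [hcomb (e * g) d c] at hc
        have heq2 : (∑ i : Fin d, C (c i) * X ^ (i : ℕ)) * (e * g) =
            e * ((∑ i : Fin d, C (c i) * X ^ (i : ℕ)) * g) := by ring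
        rw [heq2] at hc
        have h0 : aeval σ (e * 0) γ₀ = 0 := by rw [mul_zero, map_zero, LinearMap.zero_apply]
        rw [← h0] at hc
        have hdvd := (hψinj _ 0).mp hc
        rw [sub_zero] at hdvd
        have hdvd2 : fd ∣ (∑ i : Fin d, C (c i) * X ^ (i : ℕ)) :=
          (hco.symm).dvd_of_dvd_mul_right hdvd
        intro i
        by_contra hci
        have hne : (∑ i : Fin d, C (c i) * X ^ (i : ℕ)) ≠ 0 := by
          intro h0'
          have := S10.finpoly_coeff c i
          rw [h0'] at this
          simp at this
          exact hci this.symm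
        have := Polynomial.natDegree_le_of_dvd hdvd2 hne
        have h2 := S10.finpoly_natDegree_lt hd0 c
        omega
      haveI : Nonempty (Fin d) := ⟨⟨0, hd0⟩⟩
      refine ⟨hψS g, hli, ?_⟩
      have hle : Submodule.span K
          (Set.range fun i : Fin d => (aeval σ (e * g) γ₀) ^ (Fintype.card K) ^ (i : ℕ))
            ≤ LinearMap.ker (aeval σ fd) := by
        rw [Submodule.span_le]
        rintro x ⟨i, rfl⟩
        have hx : ((aeval σ (e * g) γ₀) ^ (Fintype.card K) ^ (i : ℕ)) ∈
            {x : F | x ^ (Fintype.card K) ^ d = x} := by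
          have h1 : (aeval σ (e * g) γ₀) ^ (Fintype.card K) ^ (i : ℕ) =
              aeval σ (e * (X ^ (i : ℕ) * g)) γ₀ := by
            rw [hconj (e * g) i]
            congr 1
            ring
          rw [Set.mem_setOf_eq, h1]
          exact hψS _
        rw [hSker] at hx
        exact hx
      have hfr : Module.finrank K (Submodule.span K
          (Set.range fun i : Fin d => (aeval σ (e * g) γ₀) ^ (Fintype.card K) ^ (i : ℕ))) = d := by
        rw [finrank_span_eq_card hli, Fintype.card_fin]
      rw [hSker, Submodule.span_eq]
      exact Submodule.eq_of_le_of_finrank_le hle (by rw [hdim, hfr])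
  constructor
  · intro γ hγ
    obtain ⟨r, rfl⟩ := hsurj γ
    have hco := (hnormal_iff r).mp hγ
    rw [htr' r]
    refine (hsub_iff r).mpr ?_
    rw [← hfe] at hco
    exact hco.of_mul_right_left
  · intro c hc
    -- represent c
    have h1 : IsNormalSub (Fintype.card K) d K (aeval σ (e * 1) γ₀) :=
      (hsub_iff 1).mpr isCoprime_one_left
    have hcmem : c ∈ Submodule.span K
        (Set.range fun i : Fin d => (aeval σ (e * 1) γ₀) ^ (Fintype.card K) ^ (i : ℕ)) := by
      rw [h1.2.2]
      exact Submodule.subset_span hc.1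
    rw [Submodule.mem_span_range_iff_exists_fun] at hcmem
    obtain ⟨cc, hcc⟩ := hcmem
    set g : K[X] := ∑ i : Fin d, C (cc i) * X ^ (i : ℕ) with hgdef
    have hgc : aeval σ (e * g) γ₀ = c := by
      rw [← hcc, hcomb (e * 1) d cc]
      have hre : (∑ i : Fin d, C (cc i) * X ^ (i : ℕ)) * (e * 1) = e * g := by
        rw [hgdef]; ring
      rw [hre]
    have hgco : IsCoprime g fd := (hsub_iff g).mp (by rw [hgc]; exact hc)
    -- quotient rings
    haveI hfinR : Finite (K[X] ⧸ Ideal.span {f}) := S10.finite_quot hf0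
    set ρ : (K[X] ⧸ Ideal.span {f}) →+* (K[X] ⧸ Ideal.span {fd}) :=
      Ideal.Quotient.factor (Ideal.span_singleton_le_span_singleton.mpr ⟨e, hfe.symm⟩)
      with hρ
    set φ : (K[X] ⧸ Ideal.span {f})ˣ →* (K[X] ⧸ Ideal.span {fd})ˣ :=
      Units.map (ρ : (K[X] ⧸ Ideal.span {f}) →* (K[X] ⧸ Ideal.span {fd})) with hφ
    have hmkf : ∀ p p' : K[X], Ideal.Quotient.mk (Ideal.span {f}) p =
        Ideal.Quotient.mk (Ideal.span {f}) p' ↔ f ∣ p - p' := by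
      intro p p'
      rw [Ideal.Quotient.eq, Ideal.mem_span_singleton]
    have hmkfd : ∀ p p' : K[X], Ideal.Quotient.mk (Ideal.span {fd}) p =
        Ideal.Quotient.mk (Ideal.span {fd}) p' ↔ fd ∣ p - p' := by
      intro p p'
      rw [Ideal.Quotient.eq, Ideal.mem_span_singleton]
    have hρmk : ∀ p : K[X], ρ (Ideal.Quotient.mk (Ideal.span {f}) p) =
        Ideal.Quotient.mk (Ideal.span {fd}) p := fun p => Ideal.Quotient.factor_mk _ p
    have hφsurj : Function.Surjective φ := by
      intro v
      obtain ⟨g', hg'⟩ := Ideal.Quotient.mk_surjective (↑v : K[X] ⧸ Ideal.span {fd})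
      have hg'co : IsCoprime g' fd := (S10.isUnit_mk_iff fd g').mp (hg' ▸ v.isUnit)
      obtain ⟨p, hpco, hpdvd⟩ := S10.lift_coprime hcofde hg'co
      rw [hfe] at hpco
      have hunit : IsUnit (Ideal.Quotient.mk (Ideal.span {f}) p) :=
        (S10.isUnit_mk_iff f p).mpr hpco
      refine ⟨hunit.unit, Units.ext ?_⟩
      rw [hφ, Units.coe_map]
      show ρ (↑hunit.unit) = ↑v
      rw [IsUnit.unit_spec, hρmk, ← hg']
      exact (hmkfd p g').mpr hpdvd
    have ha₀ : IsUnit (Ideal.Quotient.mk (Ideal.span {fd}) g) :=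
      (S10.isUnit_mk_iff fd g).mpr hgco
    -- the section
    set sec : (K[X] ⧸ Ideal.span {f}) → K[X] :=
      Function.surjInv Ideal.Quotient.mk_surjective with hsec
    have hsec_spec : ∀ r : K[X] ⧸ Ideal.span {f},
        Ideal.Quotient.mk (Ideal.span {f}) (sec r) = r :=
      fun r => Function.surjInv_eq Ideal.Quotient.mk_surjective r
    have hprop : ∀ u : {u : (K[X] ⧸ Ideal.span {f})ˣ // φ u = ha₀.unit},
        IsNormalElem (Fintype.card K) m K (aeval σ (sec ↑(↑u : (K[X] ⧸ Ideal.span {f})ˣ)) γ₀) ∧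
          trQ (Fintype.card K) d (m / d) (aeval σ (sec ↑(↑u : (K[X] ⧸ Ideal.span {f})ˣ)) γ₀) = c := by
      rintro ⟨u, hu⟩
      have hunit : IsUnit (Ideal.Quotient.mk (Ideal.span {f}) (sec ↑u)) := by
        rw [hsec_spec]
        exact u.isUnit
      have hcop' : IsCoprime (sec ↑u) f := (S10.isUnit_mk_iff f (sec ↑u)).mp hunit
      refine ⟨(hnormal_iff _).mpr hcop', ?_⟩
      rw [htr' (sec ↑u), ← hgc]
      rw [hψinj]
      have hval : ρ ↑u = Ideal.Quotient.mk (Ideal.span {fd}) g := by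
        have h2 := congrArg (Units.val) hu
        rw [hφ, Units.coe_map, IsUnit.unit_spec] at h2
        exact h2
      rw [← hsec_spec ↑u, hρmk] at hval
      exact (hmkfd _ g).mp hval
    have key : Nat.card {γ : F // IsNormalElem (Fintype.card K) m K γ ∧
        trQ (Fintype.card K) d (m / d) γ = c}
        = Nat.card {u : (K[X] ⧸ Ideal.span {f})ˣ // φ u = ha₀.unit} := by
      refine (Nat.card_congr (Equiv.ofBijective
        (fun (u : {u : (K[X] ⧸ Ideal.span {f})ˣ // φ u = ha₀.unit}) =>
          (⟨aeval σ (sec ↑(↑u : (K[X] ⧸ Ideal.span {f})ˣ)) γ₀, hprop u⟩ :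
          {γ : F // IsNormalElem (Fintype.card K) m K γ ∧
            trQ (Fintype.card K) d (m / d) γ = c})) ⟨?_, ?_⟩)).symm
      · rintro ⟨u, hu⟩ ⟨u', hu'⟩ huu
        have h1 : aeval σ (sec ↑u) γ₀ = aeval σ (sec ↑u') γ₀ := congrArg Subtype.val huu
        rw [← sub_eq_zero, show aeval σ (sec ↑u) γ₀ - aeval σ (sec ↑u') γ₀
          = aeval σ (sec ↑u - sec ↑u') γ₀ by rw [map_sub, LinearMap.sub_apply], hker] at h1
        have h2 : (↑u : K[X] ⧸ Ideal.span {f}) = ↑u' := by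
          rw [← hsec_spec ↑u, ← hsec_spec ↑u']
          exact (hmkf _ _).mpr h1
        exact Subtype.ext (Units.ext h2)
      · rintro ⟨γ, hN, htrc⟩
        obtain ⟨r, rfl⟩ := hsurj γ
        have hco := (hnormal_iff r).mp hN
        have hunit : IsUnit (Ideal.Quotient.mk (Ideal.span {f}) r) :=
          (S10.isUnit_mk_iff f r).mpr hco
        have hφu : φ hunit.unit = ha₀.unit := by
          apply Units.ext
          rw [hφ, Units.coe_map]
          show ρ (↑hunit.unit) = ↑ha₀.unit
          rw [IsUnit.unit_spec, IsUnit.unit_spec, hρmk]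
          refine (hmkfd r g).mpr ?_
          rw [← hψinj]
          rw [← htr' r, htrc, hgc]
        refine ⟨⟨hunit.unit, hφu⟩, ?_⟩
        apply Subtype.ext
        show aeval σ (sec ↑hunit.unit) γ₀ = aeval σ r γ₀
        apply hker'
        rw [← hmkf]
        rw [hsec_spec]
        exact IsUnit.unit_spec hunit
    rw [key, S10.fiber_card φ hφsurj ha₀.unit]
    rfl
end
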